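/- arXiv:math/0105119 — 16 statements merged into one kernel-verified Lean document; each statement's English description precedes it below -/
import Mathlib

section
/- Let f be a three-times differentiable real-valued function on an open interval I that satisfies equation (19), and suppose f is nowhere zero on I. Define Q := 2 f f'' + (f' − 1)(f' − 3). Then either Q is identically zero on I, or Q(r) ≠ 0 for every r in I. -/
/-! Differentiating `Q` and eliminating `f'''` with equation (19) gives the linear equation
`Q' = (f' + 1) / f · Q`, whose coefficient is continuous where `f ≠ 0`. Hence `Q · exp (-G)` is
constant for an antiderivative `G` of that coefficient, so `Q` is a constant multiple of a
nowhere-vanishing function. -/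

open Real

theorem ContinuousOn.exists_hasDerivAt_of_ordConnected {I : Set ℝ} {g : ℝ → ℝ}
    (hI : IsOpen I) (hI' : I.OrdConnected) (hg : ContinuousOn g I) :
    ∃ G : ℝ → ℝ, ∀ r ∈ I, HasDerivAt G (g r) r := by
  rcases I.eq_empty_or_nonempty with rfl | ⟨a, ha⟩
  · exact ⟨0, by simp⟩
  refine ⟨fun x => ∫ t in a..x, g t, fun r hr => ?_⟩
  exact intervalIntegral.integral_hasDerivAt_right
    ((hg.mono (hI'.uIcc_subset ha hr)).intervalIntegrable)
    (hg.stronglyMeasurableAtFilter hI r hr) ((hg r hr).continuousAt (hI.mem_nhds hr))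

theorem IsOpen.exists_eq_mul_exp_of_hasDerivAt_mul {I : Set ℝ} {g G Q : ℝ → ℝ}
    (hI : IsOpen I) (hI' : IsPreconnected I) (hG : ∀ r ∈ I, HasDerivAt G (g r) r)
    (hQ : ∀ r ∈ I, HasDerivAt Q (g r * Q r) r) :
    ∃ C, ∀ r ∈ I, Q r = C * exp (G r) := by
  have hF : ∀ r ∈ I, HasDerivAt (fun x => Q x * exp (-G x)) 0 r := fun r hr => by
    refine ((hQ r hr).mul (hG r hr).neg.exp).congr_deriv ?_
    ring
  obtain ⟨C, hC⟩ := hI.exists_is_const_of_deriv_eq_zero hI'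
    (fun r hr => (hF r hr).differentiableAt.differentiableWithinAt)
    (fun r hr => (hF r hr).deriv)
  refine ⟨C, fun r hr => ?_⟩
  rw [← hC r hr, mul_assoc, ← exp_add, neg_add_cancel, exp_zero, mul_one]

theorem IsOpen.forall_eq_zero_or_forall_ne_zero_of_hasDerivAt_mul {I : Set ℝ} {g Q : ℝ → ℝ}
    (hI : IsOpen I) (hI' : I.OrdConnected) (hg : ContinuousOn g I)
    (hQ : ∀ r ∈ I, HasDerivAt Q (g r * Q r) r) :
    (∀ r ∈ I, Q r = 0) ∨ (∀ r ∈ I, Q r ≠ 0) := by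
  obtain ⟨G, hG⟩ := hg.exists_hasDerivAt_of_ordConnected hI hI'
  obtain ⟨C, hC⟩ := hI.exists_eq_mul_exp_of_hasDerivAt_mul hI'.isPreconnected hG hQ
  rcases eq_or_ne C 0 with rfl | hC0
  · exact .inl fun r hr => by rw [hC r hr, zero_mul]
  · exact .inr fun r hr => by rw [hC r hr]; exact mul_ne_zero hC0 (exp_ne_zero _)

theorem eq19_hasDerivAt_Q {f f1 f2 f3 : ℝ → ℝ} {r : ℝ}
    (hf : HasDerivAt f (f1 r) r) (hf1 : HasDerivAt f1 (f2 r) r) (hf2 : HasDerivAt f2 (f3 r) r)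
    (heq : 2 * (f r) ^ 2 * f3 r + 2 * f r * (f1 r - 3) * f2 r
        - (f1 r + 1) * (f1 r - 1) * (f1 r - 3) = 0)
    (hfne : f r ≠ 0) :
    HasDerivAt (fun r => 2 * f r * f2 r + (f1 r - 1) * (f1 r - 3))
      ((f1 r + 1) / f r * (2 * f r * f2 r + (f1 r - 1) * (f1 r - 3))) r := by
  refine (((hf.const_mul 2).mul hf2).add
    ((hf1.sub_const 1).mul (hf1.sub_const 3))).congr_deriv ?_
  field_simp
  linear_combination heq

/-- For a three-times differentiable solution `f` of equation (19) on an open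
interval `I` with `f` nowhere zero, the quantity
`Q := 2 f f'' + (f' - 1)(f' - 3)` is either identically zero on `I`, or
nowhere zero on `I`. -/
theorem eq19_Q_dichotomy
    (I : Set ℝ) (hI : IsOpen I) (hI' : I.OrdConnected)
    (f f1 f2 f3 : ℝ → ℝ)
    (hf : ∀ r ∈ I, HasDerivAt f (f1 r) r)
    (hf1 : ∀ r ∈ I, HasDerivAt f1 (f2 r) r)
    (hf2 : ∀ r ∈ I, HasDerivAt f2 (f3 r) r)
    (heq : ∀ r ∈ I,
      2 * (f r) ^ 2 * f3 r + 2 * f r * (f1 r - 3) * f2 r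
        - (f1 r + 1) * (f1 r - 1) * (f1 r - 3) = 0)
    (hfne : ∀ r ∈ I, f r ≠ 0)
    (Q : ℝ → ℝ)
    (hQ : Q = fun r => 2 * f r * f2 r + (f1 r - 1) * (f1 r - 3)) :
    (∀ r ∈ I, Q r = 0) ∨ (∀ r ∈ I, Q r ≠ 0) := by
  have hcoeff : ContinuousOn (fun r => (f1 r + 1) / f r) I :=
    ContinuousOn.div
      (fun r hr => ((hf1 r hr).continuousAt.add_const 1).continuousWithinAt)
      (fun r hr => (hf r hr).continuousAt.continuousWithinAt) hfne
  subst hQ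
  exact hI.forall_eq_zero_or_forall_ne_zero_of_hasDerivAt_mul hI' hcoeff fun r hr =>
    eq19_hasDerivAt_Q (hf r hr) (hf1 r hr) (hf2 r hr) (heq r hr) (hfne r hr)
end

section
/- For every real constant ℓ ≠ 0, each of the three functions f₁(r) = −r, f₂(r) = 3r, and f₃(r) = r + r²/(2ℓ²) satisfies equation (19) at every point r of ℝ. -/
/-!
All three functions are of the form `f x = b * x + a * x ^ 2`. For such `f` we have `f''' = 0`,
`f'' = 2a`, and `f'² - 1 = 4 a f + b² - 1`, so the left-hand side of (19) factors as
`(f' - 3) (1 - b²)`. It vanishes when `b = ±1` (this covers `f₁` and `f₃`) or when `f' ≡ 3` (`f₂`).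
-/

/-- A real function `f` of `r` satisfies equation (19) at the point `r`:
`2 f² f''' + 2 f (f'-3) f'' - (f'+1)(f'-1)(f'-3) = 0`. -/
def SatisfiesEq19 (f : ℝ → ℝ) (r : ℝ) : Prop :=
  2 * (f r) ^ 2 * deriv (deriv (deriv f)) r
    + 2 * f r * (deriv f r - 3) * deriv (deriv f) r
    - (deriv f r + 1) * (deriv f r - 1) * (deriv f r - 3) = 0

theorem deriv_mul_add_mul_sq (a b : ℝ) :
    deriv (fun x : ℝ => b * x + a * x ^ 2) = fun x => b + 2 * a * x := by
  funext x
  have h : HasDerivAt (fun x : ℝ => b * x + a * x ^ 2) (b * 1 + a * (2 * x)) x :=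
    ((hasDerivAt_id' x).const_mul b).add ((hasDerivAt_pow 2 x).const_mul a |>.congr_deriv (by ring))
  rw [h.deriv]; ring

theorem deriv_const_add_mul (a b : ℝ) : deriv (fun x : ℝ => b + a * x) = fun _ => a := by
  funext x
  simp

theorem satisfiesEq19_mul_add_mul_sq_iff (a b r : ℝ) :
    SatisfiesEq19 (fun x => b * x + a * x ^ 2) r ↔ (b + 2 * a * r - 3) * (1 - b ^ 2) = 0 := by
  simp only [SatisfiesEq19, deriv_mul_add_mul_sq, deriv_const_add_mul, deriv_const']
  constructor <;> intro h <;> linear_combination h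

theorem elementary_solutions_eq19_general (ℓ : ℝ) (r : ℝ) :
    SatisfiesEq19 (fun x => -x) r ∧
    SatisfiesEq19 (fun x => 3 * x) r ∧
    SatisfiesEq19 (fun x => x + x ^ 2 / (2 * ℓ ^ 2)) r := by
  have h₁ : (fun x : ℝ => -x) = fun x => -1 * x + 0 * x ^ 2 := by funext x; ring
  have h₂ : (fun x : ℝ => 3 * x) = fun x => 3 * x + 0 * x ^ 2 := by funext x; ring
  have h₃ : (fun x : ℝ => x + x ^ 2 / (2 * ℓ ^ 2)) = fun x => 1 * x + (2 * ℓ ^ 2)⁻¹ * x ^ 2 := by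
    funext x; ring
  rw [h₁, h₂, h₃, satisfiesEq19_mul_add_mul_sq_iff, satisfiesEq19_mul_add_mul_sq_iff,
    satisfiesEq19_mul_add_mul_sq_iff]
  refine ⟨?_, ?_, ?_⟩ <;> ring

/-- For every nonzero real constant `ℓ`, each of `f₁(r) = -r`, `f₂(r) = 3r`
and `f₃(r) = r + r²/(2ℓ²)` satisfies equation (19) at every point of `ℝ`. -/
theorem elementary_solutions_eq19 (ℓ : ℝ) (hℓ : ℓ ≠ 0) (r : ℝ) :
    SatisfiesEq19 (fun x => -x) r ∧
    SatisfiesEq19 (fun x => 3 * x) r ∧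
    SatisfiesEq19 (fun x => x + x ^ 2 / (2 * ℓ ^ 2)) r :=
  elementary_solutions_eq19_general ℓ r
end

section
/- Let a, b, c be smooth real-valued functions on an open interval I with a and b nowhere zero and c positive, satisfying the first-order system (15) in the coordinate r. Then f := c² satisfies the third-order equation (19) on I; moreover f' = 1 + 2a/b (equivalently b = 2a/(f' − 1)) and a² · (2 f f'' + (f' − 1)(f' − 3)) = (f' − 1)(f' − 3) f at every point of I. -/
set_option maxHeartbeats 4000000 in
/-- If smooth functions `a`, `b`, `c` on an open interval `I` (with `a`, `b`
nowhere zero and `c` positive) satisfy the first-order system (15) in the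
coordinate `r` (i.e. `b a' = 1 - b/(2a) - a²/c²`, `b b' = b²/(2a²) - b²/c²`,
`b c' = a/c + b/(2c)`), then `f := c²` satisfies the third-order equation (19)
on `I`; moreover `f' = 1 + 2a/b` and
`a² (2 f f'' + (f'-1)(f'-3)) = (f'-1)(f'-3) f` on `I`. -/
theorem firstOrderSystem_gives_eq19
    (I : Set ℝ) (hI : IsOpen I) (hI' : I.OrdConnected)
    (a b c : ℝ → ℝ)
    (ha : ContDiffOn ℝ (⊤ : ℕ∞) a I) (hb : ContDiffOn ℝ (⊤ : ℕ∞) b I)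
    (hc : ContDiffOn ℝ (⊤ : ℕ∞) c I)
    (hane : ∀ r ∈ I, a r ≠ 0) (hbne : ∀ r ∈ I, b r ≠ 0)
    (hcpos : ∀ r ∈ I, 0 < c r)
    (heqa : ∀ r ∈ I, b r * deriv a r = 1 - b r / (2 * a r) - (a r) ^ 2 / (c r) ^ 2)
    (heqb : ∀ r ∈ I, b r * deriv b r = (b r) ^ 2 / (2 * (a r) ^ 2) - (b r) ^ 2 / (c r) ^ 2)
    (heqc : ∀ r ∈ I, b r * deriv c r = a r / c r + b r / (2 * c r))
    (f : ℝ → ℝ) (hf : f = fun r => (c r) ^ 2) :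
    ∀ r ∈ I,
      (2 * (f r) ^ 2 * deriv (deriv (deriv f)) r
          + 2 * f r * (deriv f r - 3) * deriv (deriv f) r
          - (deriv f r + 1) * (deriv f r - 1) * (deriv f r - 3) = 0) ∧
      deriv f r = 1 + 2 * a r / b r ∧
      (a r) ^ 2 * (2 * f r * deriv (deriv f) r + (deriv f r - 1) * (deriv f r - 3))
        = (deriv f r - 1) * (deriv f r - 3) * f r := by
  -- basic differentiability
  have hda : ∀ r ∈ I, HasDerivAt a (deriv a r) r := fun r hr =>
    (((ha r hr).contDiffAt (hI.mem_nhds hr)).differentiableAt (by simp)).hasDerivAt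
  have hdb : ∀ r ∈ I, HasDerivAt b (deriv b r) r := fun r hr =>
    (((hb r hr).contDiffAt (hI.mem_nhds hr)).differentiableAt (by simp)).hasDerivAt
  have hdc : ∀ r ∈ I, HasDerivAt c (deriv c r) r := fun r hr =>
    (((hc r hr).contDiffAt (hI.mem_nhds hr)).differentiableAt (by simp)).hasDerivAt
  -- solved forms of the ODEs
  have hA : ∀ r ∈ I, deriv a r
      = (1 - b r / (2 * a r) - (a r) ^ 2 / (c r) ^ 2) / b r := fun r hr => by
    rw [eq_div_iff (hbne r hr), mul_comm]; exact heqa r hr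
  have hB : ∀ r ∈ I, deriv b r
      = ((b r) ^ 2 / (2 * (a r) ^ 2) - (b r) ^ 2 / (c r) ^ 2) / b r := fun r hr => by
    rw [eq_div_iff (hbne r hr), mul_comm]; exact heqb r hr
  have hC : ∀ r ∈ I, deriv c r
      = (a r / c r + b r / (2 * c r)) / b r := fun r hr => by
    rw [eq_div_iff (hbne r hr), mul_comm]; exact heqc r hr
  -- first derivative of f
  have E1 : ∀ r ∈ I, deriv f r = 1 + 2 * a r / b r := by
    intro r hr
    have hcne := (hcpos r hr).ne'
    have hbne' := hbne r hr
    have hfd : HasDerivAt f (2 * c r ^ 1 * deriv c r) r := by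
      rw [hf]
      simpa using (hdc r hr).fun_pow 2
    rw [hfd.deriv, hC r hr]
    field_simp
    ring
  -- second derivative of f
  have E2 : ∀ r ∈ I, deriv (deriv f) r
      = 2 * (1 - b r / a r - (a r) ^ 2 / (c r) ^ 2 + a r * b r / (c r) ^ 2) / (b r) ^ 2 := by
    intro r hr
    have hcne := (hcpos r hr).ne'
    have hane' := hane r hr
    have hbne' := hbne r hr
    have heq : deriv f =ᶠ[nhds r] fun x => 1 + 2 * (a x / b x) :=
      Filter.eventuallyEq_of_mem (hI.mem_nhds hr)
        (fun x hx => by rw [E1 x hx]; ring)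
    rw [heq.deriv_eq]
    have hd : HasDerivAt (fun x => 1 + 2 * (a x / b x))
        (2 * ((deriv a r * b r - a r * deriv b r) / (b r) ^ 2)) r :=
      (((hda r hr).div (hdb r hr) hbne').const_mul 2).const_add 1
    rw [hd.deriv, hA r hr, hB r hr]
    field_simp
    ring
  -- now the main statement
  intro r hr
  have hcne := (hcpos r hr).ne'
  have hane' := hane r hr
  have hbne' := hbne r hr
  have hE1 := E1 r hr
  have hE2 := E2 r hr
  -- third derivative of f
  have heq2 : deriv (deriv f) =ᶠ[nhds r]
      fun x => 2 * (1 - b x / a x - (a x) ^ 2 / (c x) ^ 2 + a x * b x / (c x) ^ 2) / (b x) ^ 2 :=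
    Filter.eventuallyEq_of_mem (hI.mem_nhds hr) E2
  have hinner : HasDerivAt
      (fun x => 1 - b x / a x - (a x) ^ 2 / (c x) ^ 2 + a x * b x / (c x) ^ 2)
      (0 - (deriv b r * a r - b r * deriv a r) / (a r) ^ 2
        - ((2 * a r ^ 1 * deriv a r) * (c r) ^ 2 - (a r) ^ 2 * (2 * c r ^ 1 * deriv c r))
            / ((c r) ^ 2) ^ 2
        + ((deriv a r * b r + a r * deriv b r) * (c r) ^ 2
            - a r * b r * (2 * c r ^ 1 * deriv c r)) / ((c r) ^ 2) ^ 2) r := by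
    have h1 : HasDerivAt (fun x => 1 - b x / a x)
        (0 - (deriv b r * a r - b r * deriv a r) / (a r) ^ 2) r :=
      (hasDerivAt_const r (1:ℝ)).sub ((hdb r hr).div (hda r hr) hane')
    have h2 : HasDerivAt (fun x => (a x) ^ 2 / (c x) ^ 2)
        ((2 * a r ^ 1 * deriv a r * (c r) ^ 2 - (a r) ^ 2 * (2 * c r ^ 1 * deriv c r))
          / ((c r) ^ 2) ^ 2) r :=
      ((hda r hr).fun_pow 2).div ((hdc r hr).fun_pow 2) (pow_ne_zero 2 hcne)
    have h3 : HasDerivAt (fun x => a x * b x / (c x) ^ 2)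
        (((deriv a r * b r + a r * deriv b r) * (c r) ^ 2
          - a r * b r * (2 * c r ^ 1 * deriv c r)) / ((c r) ^ 2) ^ 2) r :=
      ((hda r hr).mul (hdb r hr)).div ((hdc r hr).fun_pow 2) (pow_ne_zero 2 hcne)
    exact (h1.sub h2).add h3
  have hF : HasDerivAt
      (fun x => 2 * (1 - b x / a x - (a x) ^ 2 / (c x) ^ 2 + a x * b x / (c x) ^ 2) / (b x) ^ 2)
      ((2 * (0 - (deriv b r * a r - b r * deriv a r) / (a r) ^ 2
        - ((2 * a r ^ 1 * deriv a r) * (c r) ^ 2 - (a r) ^ 2 * (2 * c r ^ 1 * deriv c r))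
            / ((c r) ^ 2) ^ 2
        + ((deriv a r * b r + a r * deriv b r) * (c r) ^ 2
            - a r * b r * (2 * c r ^ 1 * deriv c r)) / ((c r) ^ 2) ^ 2)
          * (b r) ^ 2
        - 2 * (1 - b r / a r - (a r) ^ 2 / (c r) ^ 2 + a r * b r / (c r) ^ 2)
            * (2 * b r ^ 1 * deriv b r)) / ((b r) ^ 2) ^ 2) r :=
    (hinner.const_mul 2).div ((hdb r hr).fun_pow 2) (pow_ne_zero 2 hbne')
  have E3 : deriv (deriv (deriv f)) r = _ := heq2.deriv_eq.trans hF.deriv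
  refine ⟨?_, hE1, ?_⟩
  · rw [E3, hE1, hE2, hA r hr, hB r hr, hC r hr, hf]
    field_simp
    ring
  · rw [hE1, hE2, hf]
    field_simp
    ring
end

section
/- Let f be a smooth real-valued function on an open interval I satisfying equation (19), with f > 0 on I. Define Q := 2 f f'' + (f' − 1)(f' − 3), and suppose that on all of I one has Q ≠ 0, f' ≠ 1, and (f' − 1)(f' − 3) f / Q > 0. Define a := √((f' − 1)(f' − 3) f / Q), b := 2a/(f' − 1), and c := √f. Then a, b, c satisfy the first-order system (15) in the coordinate r on I. -/
set_option maxHeartbeats 2000000 in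
/-- Conversely, given a smooth positive solution `f` of equation (19) on an
open interval `I` with `Q := 2 f f'' + (f'-1)(f'-3)` nowhere zero, `f' ≠ 1`,
and `(f'-1)(f'-3) f / Q > 0` on `I`, the functions
`a := √((f'-1)(f'-3) f / Q)`, `b := 2a/(f'-1)`, `c := √f`
satisfy the first-order system (15) in the coordinate `r` on `I`. -/
theorem eq19_gives_firstOrderSystem
    (I : Set ℝ) (hI : IsOpen I) (hI' : I.OrdConnected)
    (f : ℝ → ℝ) (hf : ContDiffOn ℝ (⊤ : ℕ∞) f I)
    (hfpos : ∀ r ∈ I, 0 < f r)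
    (heq : ∀ r ∈ I,
      2 * (f r) ^ 2 * deriv (deriv (deriv f)) r
        + 2 * f r * (deriv f r - 3) * deriv (deriv f) r
        - (deriv f r + 1) * (deriv f r - 1) * (deriv f r - 3) = 0)
    (Q : ℝ → ℝ)
    (hQdef : Q = fun r =>
      2 * f r * deriv (deriv f) r + (deriv f r - 1) * (deriv f r - 3))
    (hQne : ∀ r ∈ I, Q r ≠ 0)
    (hf1 : ∀ r ∈ I, deriv f r ≠ 1)
    (hratio : ∀ r ∈ I, 0 < (deriv f r - 1) * (deriv f r - 3) * f r / Q r)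
    (a b c : ℝ → ℝ)
    (hadef : a = fun r => Real.sqrt ((deriv f r - 1) * (deriv f r - 3) * f r / Q r))
    (hbdef : b = fun r => 2 * a r / (deriv f r - 1))
    (hcdef : c = fun r => Real.sqrt (f r)) :
    ∀ r ∈ I,
      b r * deriv a r = 1 - b r / (2 * a r) - (a r) ^ 2 / (c r) ^ 2 ∧
      b r * deriv b r = (b r) ^ 2 / (2 * (a r) ^ 2) - (b r) ^ 2 / (c r) ^ 2 ∧
      b r * deriv c r = a r / c r + b r / (2 * c r) := by
  intro r hr
  have hrn : I ∈ nhds r := hI.mem_nhds hr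
  have hc1 : ContDiffOn ℝ (⊤ : ℕ∞) (deriv f) I := hf.deriv_of_isOpen hI (by simp)
  have hc2 : ContDiffOn ℝ (⊤ : ℕ∞) (deriv (deriv f)) I := hc1.deriv_of_isOpen hI (by simp)
  have hfd : HasDerivAt f (deriv f r) r :=
    (((hf.differentiableOn (by simp)).differentiableAt hrn)).hasDerivAt
  have hfd2 : HasDerivAt (deriv f) (deriv (deriv f) r) r :=
    (((hc1.differentiableOn (by simp)).differentiableAt hrn)).hasDerivAt
  have hfd3 : HasDerivAt (deriv (deriv f)) (deriv (deriv (deriv f)) r) r :=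
    (((hc2.differentiableOn (by simp)).differentiableAt hrn)).hasDerivAt
  have hFpos := hfpos r hr
  have hP1 : deriv f r - 1 ≠ 0 := sub_ne_zero.mpr (hf1 r hr)
  have hQner := hQne r hr
  have hApos := hratio r hr
  have hAne : (deriv f r - 1) * (deriv f r - 3) * f r / Q r ≠ 0 := ne_of_gt hApos
  have hP3 : deriv f r - 3 ≠ 0 := by
    intro h
    rw [h, mul_zero, zero_mul, zero_div] at hApos
    exact lt_irrefl 0 hApos
  -- derivative of the pair product (f'-1)(f'-3)
  have hN1 := (hfd2.sub_const 1).mul (hfd2.sub_const 3)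
  -- derivative of N = (f'-1)(f'-3) f
  have hNd := hN1.mul hfd
  -- derivative of Q
  have hQd : HasDerivAt Q
      (2 * deriv f r * deriv (deriv f) r + 2 * f r * deriv (deriv (deriv f)) r
        + (deriv (deriv f) r * (deriv f r - 3) + (deriv f r - 1) * deriv (deriv f) r)) r := by
    rw [hQdef]
    exact ((hfd.const_mul 2).mul hfd3).add hN1
  have hAd := hNd.div hQd hQner
  have haD : HasDerivAt a
      ((((deriv (deriv f) r * (deriv f r - 3) + (deriv f r - 1) * deriv (deriv f) r) * f r
          + (deriv f r - 1) * (deriv f r - 3) * deriv f r) * Q r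
        - (deriv f r - 1) * (deriv f r - 3) * f r
            * (2 * deriv f r * deriv (deriv f) r + 2 * f r * deriv (deriv (deriv f)) r
              + (deriv (deriv f) r * (deriv f r - 3) + (deriv f r - 1) * deriv (deriv f) r)))
        / Q r ^ 2
        / (2 * Real.sqrt ((deriv f r - 1) * (deriv f r - 3) * f r / Q r))) r := by
    rw [hadef]
    exact hAd.sqrt hAne
  have hbD : HasDerivAt b
      ((2 * ((((deriv (deriv f) r * (deriv f r - 3) + (deriv f r - 1) * deriv (deriv f) r) * f r
          + (deriv f r - 1) * (deriv f r - 3) * deriv f r) * Q r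
        - (deriv f r - 1) * (deriv f r - 3) * f r
            * (2 * deriv f r * deriv (deriv f) r + 2 * f r * deriv (deriv (deriv f)) r
              + (deriv (deriv f) r * (deriv f r - 3) + (deriv f r - 1) * deriv (deriv f) r)))
        / Q r ^ 2
        / (2 * Real.sqrt ((deriv f r - 1) * (deriv f r - 3) * f r / Q r)))
          * (deriv f r - 1) - 2 * a r * deriv (deriv f) r) / (deriv f r - 1) ^ 2) r := by
    rw [hbdef]
    exact (haD.const_mul 2).div (hfd2.sub_const 1) hP1
  have hcD : HasDerivAt c (deriv f r / (2 * Real.sqrt (f r))) r := by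
    rw [hcdef]
    exact hfd.sqrt hFpos.ne'
  have hda := haD.deriv
  have hdb := hbD.deriv
  have hdc := hcD.deriv
  have hav : a r = Real.sqrt ((deriv f r - 1) * (deriv f r - 3) * f r / Q r) := by rw [hadef]
  have hbv : b r = 2 * a r / (deriv f r - 1) := by rw [hbdef]
  have hcv : c r = Real.sqrt (f r) := by rw [hcdef]
  have hsapos : 0 < a r := by rw [hadef]; exact Real.sqrt_pos.mpr hApos
  have hsfpos : 0 < c r := by rw [hcdef]; exact Real.sqrt_pos.mpr hFpos
  have hsa2 : (a r) ^ 2 = (deriv f r - 1) * (deriv f r - 3) * f r / Q r := by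
    rw [hadef]; exact Real.sq_sqrt hApos.le
  have hsf2 : (c r) ^ 2 = f r := by
    rw [hcdef]; exact Real.sq_sqrt hFpos.le
  rw [← hav] at hda hdb
  rw [← hcv] at hdc
  -- eliminate the third derivative using equation (19)
  have hq3 : deriv (deriv (deriv f)) r =
      ((deriv f r + 1) * (deriv f r - 1) * (deriv f r - 3)
        - 2 * f r * (deriv f r - 3) * deriv (deriv f) r) / (2 * f r ^ 2) := by
    rw [eq_div_iff (by positivity)]
    linear_combination heq r hr
  have hQr : Q r = 2 * f r * deriv (deriv f) r + (deriv f r - 1) * (deriv f r - 3) := by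
    rw [hQdef]
  rw [hq3] at hda hdb
  rw [hQr] at hda hdb hsa2 hQner
  have hba : b r / (2 * a r) = 1 / (deriv f r - 1) := by
    rw [hbv]; field_simp
  have hb2 : (b r) ^ 2 = 4 * ((deriv f r - 1) * (deriv f r - 3) * f r
      / (2 * f r * deriv (deriv f) r + (deriv f r - 1) * (deriv f r - 3)))
      / (deriv f r - 1) ^ 2 := by
    rw [hbv, div_pow, mul_pow, hsa2]; ring
  set F := f r with hFv
  set P := deriv f r with hPv
  set q2v := deriv (deriv f) r with hq2v
  set QQ := 2 * F * q2v + (P - 1) * (P - 3) with hQQv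
  clear_value QQ q2v P F
  refine ⟨?_, ?_, ?_⟩
  · -- first equation
    rw [hba, hsa2, hsf2, hda, hbv]
    field_simp
    rw [hQQv]
    ring
  · -- second equation
    have g2exp : b r * deriv b r = 2 / (P - 1) * (b r * deriv a r)
        - q2v * (b r) ^ 2 / (P - 1) := by
      rw [hdb, ← hda, hbv]
      field_simp
    have g1 : b r * deriv a r = 1 - b r / (2 * a r) - (a r) ^ 2 / (c r) ^ 2 := by
      rw [hba, hsa2, hsf2, hda, hbv]
      field_simp
      rw [hQQv]
      ring
    have hb2a : (b r) ^ 2 / (2 * (a r) ^ 2) = 2 / (P - 1) ^ 2 := by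
      rw [hbv]; field_simp [hsapos.ne']
    rw [g2exp, g1, hba, hb2a, hsa2, hsf2, hb2]
    field_simp
    rw [hQQv]
    ring
  · -- third equation
    rw [hdc, hbv, hcv]
    field_simp
    ring
end

section
/- Let f be a three-times continuously differentiable real-valued function on an open interval I satisfying equation (19), with f'' nowhere zero on I. Suppose g is a differentiable real-valued function on an open interval J with g(J) ⊆ I and f'(g(ρ)) = ρ for all ρ ∈ J. Then the function γ(ρ) := −f(g(ρ)) · f''(g(ρ)) is differentiable on J and satisfies 2 γ(ρ) γ'(ρ) + 6 γ(ρ) = (1 − ρ²)(3 − ρ) for all ρ ∈ J. -/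
/-- Passing from equation (19) to equation (25): if `f` is `C³` on an open
interval `I`, satisfies (19), and has nowhere-vanishing second derivative,
and `g` is a differentiable local inverse of `f'` on an open interval `J`
(so `f'(g(ρ)) = ρ`), then `γ(ρ) := -f(g(ρ)) f''(g(ρ))` is differentiable
and satisfies `2 γ γ' + 6 γ = (1 - ρ²)(3 - ρ)` on `J`. -/
theorem eq19_to_eq25
    (I : Set ℝ) (hI : IsOpen I) (hI' : I.OrdConnected)
    (f : ℝ → ℝ) (hf : ContDiffOn ℝ 3 f I)
    (heq : ∀ r ∈ I,
      2 * (f r) ^ 2 * deriv (deriv (deriv f)) r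
        + 2 * f r * (deriv f r - 3) * deriv (deriv f) r
        - (deriv f r + 1) * (deriv f r - 1) * (deriv f r - 3) = 0)
    (hf2ne : ∀ r ∈ I, deriv (deriv f) r ≠ 0)
    (J : Set ℝ) (hJ : IsOpen J) (hJ' : J.OrdConnected)
    (g : ℝ → ℝ) (hg : DifferentiableOn ℝ g J)
    (hgJ : Set.MapsTo g J I)
    (hinv : ∀ ρ ∈ J, deriv f (g ρ) = ρ)
    (γ : ℝ → ℝ)
    (hγ : γ = fun ρ => -(f (g ρ) * deriv (deriv f) (g ρ))) :
    ∀ ρ ∈ J,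
      DifferentiableAt ℝ γ ρ ∧
      2 * γ ρ * deriv γ ρ + 6 * γ ρ = (1 - ρ ^ 2) * (3 - ρ) := by
  have hd1 : ContDiffOn ℝ 2 (deriv f) I := hf.deriv_of_isOpen hI (by norm_num)
  have hd2 : ContDiffOn ℝ 1 (deriv (deriv f)) I := hd1.deriv_of_isOpen hI (by norm_num)
  intro ρ hρ
  set r := g ρ with hr
  have hrI : r ∈ I := hgJ hρ
  have hf1 : DifferentiableAt ℝ f r :=
    (hf.differentiableOn (by norm_num)).differentiableAt (hI.mem_nhds hrI)
  have hf2 : DifferentiableAt ℝ (deriv f) r :=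
    (hd1.differentiableOn (by norm_num)).differentiableAt (hI.mem_nhds hrI)
  have hf3 : DifferentiableAt ℝ (deriv (deriv f)) r :=
    (hd2.differentiableOn (by norm_num)).differentiableAt (hI.mem_nhds hrI)
  have hgd : DifferentiableAt ℝ g ρ := hg.differentiableAt (hJ.mem_nhds hρ)
  have hg' : HasDerivAt g (deriv g ρ) ρ := hgd.hasDerivAt
  -- derivative of g via the inverse relation
  have hcomp : HasDerivAt (fun x => deriv f (g x))
      (deriv (deriv f) r * deriv g ρ) ρ := hf2.hasDerivAt.comp ρ hg'
  have hEq : (fun x => deriv f (g x)) =ᶠ[nhds ρ] fun x => x := by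
    filter_upwards [hJ.mem_nhds hρ] with x hx using hinv x hx
  have hid : HasDerivAt (fun x : ℝ => x) (deriv (deriv f) r * deriv g ρ) ρ :=
    hcomp.congr_of_eventuallyEq hEq.symm
  have hk : deriv (deriv f) r * deriv g ρ = 1 := hid.unique (hasDerivAt_id ρ)
  -- derivative of γ
  have hγd : HasDerivAt γ
      (-((deriv f r * deriv g ρ) * deriv (deriv f) r
        + f r * (deriv (deriv (deriv f)) r * deriv g ρ))) ρ := by
    rw [hγ]
    exact (((hf1.hasDerivAt.comp ρ hg').mul (hf3.hasDerivAt.comp ρ hg'))).neg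
  refine ⟨hγd.differentiableAt, ?_⟩
  rw [hγd.deriv]
  have hρr : deriv f r = ρ := hinv ρ hρ
  have hE := heq r hrI
  rw [hρr] at hE ⊢
  simp only [hγ]
  linear_combination (2 * f r * ρ * deriv (deriv f) r
    + 2 * (f r) ^ 2 * deriv (deriv (deriv f)) r) * hk + hE
end

section
/- Let γ be a differentiable real-valued function on an open interval I (with variable ρ) satisfying 2 γ γ' + 6 γ = (1 − ρ²)(3 − ρ) on I, and suppose that 1 − ρ ≠ 0 and 1 − ρ − γ(ρ) ≠ 0 for all ρ ∈ I. Define z(ρ) := (1 − ρ)² / (2(1 − ρ − γ(ρ))) and v(ρ) := ρ − 1. Then z is differentiable and the relation 2 z(ρ) (1 − z(ρ)²) = (v(ρ) + 2 z(ρ)) · z'(ρ) holds for all ρ ∈ I; that is, the curve (z(ρ), v(ρ)) satisfies equation (27) with z as independent variable. -/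
theorem hasDerivAt_one_sub_sq_div {γ : ℝ → ℝ} {γ' ρ : ℝ} (hγ : HasDerivAt γ γ' ρ)
    (hD : 1 - ρ - γ ρ ≠ 0) :
    HasDerivAt (fun x => (1 - x) ^ 2 / (2 * (1 - x - γ x)))
      ((1 - ρ) * (2 * γ ρ - (1 - ρ) + (1 - ρ) * γ') / (2 * (1 - ρ - γ ρ) ^ 2)) ρ := by
  have hnum : HasDerivAt (fun x : ℝ => (1 - x) ^ 2) (-(2 * (1 - ρ))) ρ := by
    simpa using ((hasDerivAt_id ρ).const_sub 1).fun_pow 2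
  have hden : HasDerivAt (fun x => 2 * (1 - x - γ x)) (2 * (-1 - γ')) ρ := by
    simpa using (((hasDerivAt_id ρ).const_sub 1).sub hγ).const_mul 2
  refine (hnum.fun_div hden (mul_ne_zero two_ne_zero hD)).congr_deriv ?_
  field_simp
  ring

/- With `u = 1 - ρ` and `D = 1 - ρ - g`, one has `ρ - 1 + 2 z = u g / D` and
`(1 - ρ²)(3 - ρ) = u (4 - u²)`, so the two sides of (27) differ by
`u³ / (4 D³)` times the defect of (25). -/
theorem eq27_of_eq25 {ρ g g' z : ℝ} (h25 : 2 * g * g' + 6 * g = (1 - ρ ^ 2) * (3 - ρ))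
    (hD : 1 - ρ - g ≠ 0) (hz : z = (1 - ρ) ^ 2 / (2 * (1 - ρ - g))) :
    2 * z * (1 - z ^ 2) =
      (ρ - 1 + 2 * z) * ((1 - ρ) * (2 * g - (1 - ρ) + (1 - ρ) * g') / (2 * (1 - ρ - g) ^ 2)) := by
  subst hz
  field_simp
  linear_combination (-(1 - ρ) ^ 3) * h25

theorem eq25_to_eq27_general
    (I : Set ℝ) (hI : IsOpen I)
    (γ : ℝ → ℝ) (hγdiff : DifferentiableOn ℝ γ I)
    (heq : ∀ ρ ∈ I, 2 * γ ρ * deriv γ ρ + 6 * γ ρ = (1 - ρ ^ 2) * (3 - ρ))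
    (h2 : ∀ ρ ∈ I, 1 - ρ - γ ρ ≠ 0)
    (z v : ℝ → ℝ)
    (hz : z = fun ρ => (1 - ρ) ^ 2 / (2 * (1 - ρ - γ ρ)))
    (hv : v = fun ρ => ρ - 1) :
    ∀ ρ ∈ I,
      DifferentiableAt ℝ z ρ ∧
      2 * z ρ * (1 - (z ρ) ^ 2) = (v ρ + 2 * z ρ) * deriv z ρ := by
  intro ρ hρ
  have hγ : HasDerivAt γ (deriv γ ρ) ρ :=
    ((hγdiff ρ hρ).differentiableAt (hI.mem_nhds hρ)).hasDerivAt
  subst hz hv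
  have hzD := hasDerivAt_one_sub_sq_div hγ (h2 ρ hρ)
  exact ⟨hzD.differentiableAt, hzD.deriv ▸ eq27_of_eq25 (heq ρ hρ) (h2 ρ hρ) rfl⟩

/-- Passing from equation (25) to equation (27): if `γ` solves
`2 γ γ' + 6 γ = (1 - ρ²)(3 - ρ)` on an open interval `I` with `1 - ρ ≠ 0` and
`1 - ρ - γ(ρ) ≠ 0`, then `z(ρ) := (1-ρ)²/(2(1-ρ-γ(ρ)))` is differentiable and
the curve `(z(ρ), v(ρ))` with `v(ρ) := ρ - 1` satisfies
`2 z (1 - z²) = (v + 2z) z'` on `I`. -/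
theorem eq25_to_eq27
    (I : Set ℝ) (hI : IsOpen I) (hI' : I.OrdConnected)
    (γ : ℝ → ℝ) (hγdiff : DifferentiableOn ℝ γ I)
    (heq : ∀ ρ ∈ I, 2 * γ ρ * deriv γ ρ + 6 * γ ρ = (1 - ρ ^ 2) * (3 - ρ))
    (h1 : ∀ ρ ∈ I, 1 - ρ ≠ 0)
    (h2 : ∀ ρ ∈ I, 1 - ρ - γ ρ ≠ 0)
    (z v : ℝ → ℝ)
    (hz : z = fun ρ => (1 - ρ) ^ 2 / (2 * (1 - ρ - γ ρ)))
    (hv : v = fun ρ => ρ - 1) :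
    ∀ ρ ∈ I,
      DifferentiableAt ℝ z ρ ∧
      2 * z ρ * (1 - (z ρ) ^ 2) = (v ρ + 2 * z ρ) * deriv z ρ :=
  eq25_to_eq27_general I hI γ hγdiff heq h2 z v hz hv
end

section
/- Fix a constant C ∈ ℝ and a base point z₁ ∈ (0,1). Then the function v(z) := √z · (1 − z²)^{−1/4} · (C + ∫_{z₁}^{z} s^{−1/2} (1 − s²)^{−3/4} ds), defined for z ∈ (0,1), is differentiable and satisfies equation (27), i.e. 2 z (1 − z²) v'(z) = v(z) + 2z, for all z ∈ (0,1). -/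
open intervalIntegral

/-!
Variation of constants: `v = u · (C + G)`, where `u z = √z (1 - z²)^{-1/4}` solves the
homogeneous equation `2 z (1 - z²) u' = u` and, by the fundamental theorem of calculus,
`G' = z^{-1/2} (1 - z²)^{-3/4} = 1 / (u (1 - z²))`. The product rule then gives
`2 z (1 - z²) v' = u (C + G) + 2 z = v + 2 z`.
-/

theorem hasDerivAt_integral_of_continuousOn {E : Type*} [NormedAddCommGroup E] [NormedSpace ℝ E]
    [CompleteSpace E] {f : ℝ → E} {s : Set ℝ} (hf : ContinuousOn f s) (hs : IsOpen s)
    (hs' : s.OrdConnected) {a b : ℝ} (ha : a ∈ s) (hb : b ∈ s) :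
    HasDerivAt (fun t => ∫ x in a..t, f x) (f b) b :=
  integral_hasDerivAt_right ((hf.mono (hs'.uIcc_subset ha hb)).intervalIntegrable)
    (hf.stronglyMeasurableAtFilter hs b hb)
    (hf.continuousAt (hs.mem_nhds hb))

namespace Eq27

noncomputable def homogeneousSolution (z : ℝ) : ℝ :=
  Real.sqrt z * (1 - z ^ 2) ^ (-(1 / 4 : ℝ))

noncomputable def integrand (s : ℝ) : ℝ :=
  s ^ (-(1 / 2 : ℝ)) * (1 - s ^ 2) ^ (-(3 / 4 : ℝ))

lemma one_sub_sq_pos {z : ℝ} (hz : z ∈ Set.Ioo (0 : ℝ) 1) : 0 < 1 - z ^ 2 := by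
  nlinarith [hz.1, hz.2]

lemma continuousOn_integrand : ContinuousOn integrand (Set.Ioo 0 1) := fun z hz =>
  ((Real.continuousAt_rpow_const z _ (Or.inl hz.1.ne')).mul
    ((continuousAt_const.sub (continuousAt_id.pow 2)).rpow_const
      (Or.inl (one_sub_sq_pos hz).ne'))).continuousWithinAt

lemma hasDerivAt_homogeneousSolution {z : ℝ} (hz : z ∈ Set.Ioo (0 : ℝ) 1) :
    HasDerivAt homogeneousSolution (homogeneousSolution z / (2 * z * (1 - z ^ 2))) z := by
  have hp := one_sub_sq_pos hz
  have hsqrt : HasDerivAt Real.sqrt (1 / (2 * Real.sqrt z)) z := Real.hasDerivAt_sqrt hz.1.ne'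
  have hpow : HasDerivAt (fun t : ℝ => (1 - t ^ 2) ^ (-(1 / 4 : ℝ)))
      (-(2 * z) * (-(1 / 4 : ℝ)) * (1 - z ^ 2) ^ (-(1 / 4 : ℝ) - 1)) z := by
    refine HasDerivAt.rpow_const ?_ (Or.inl hp.ne')
    simpa using ((hasDerivAt_pow 2 z).const_sub 1)
  refine (hsqrt.mul hpow).congr_deriv ?_
  have hsq : Real.sqrt z ^ 2 = z := Real.sq_sqrt hz.1.le
  have hz0 : z ≠ 0 := hz.1.ne'
  have hsqrt_ne : Real.sqrt z ≠ 0 := (Real.sqrt_pos.mpr hz.1).ne'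
  rw [Real.rpow_sub_one hp.ne', homogeneousSolution]
  field_simp
  linear_combination (4 * z ^ 2 - 4) * hsq

lemma homogeneousSolution_mul_integrand {z : ℝ} (hz : z ∈ Set.Ioo (0 : ℝ) 1) :
    homogeneousSolution z * integrand z * (1 - z ^ 2) = 1 := by
  have hp := one_sub_sq_pos hz
  calc homogeneousSolution z * integrand z * (1 - z ^ 2)
      = z ^ (1 / 2 + -(1 / 2) : ℝ) * (1 - z ^ 2) ^ (-(1 / 4) + -(3 / 4) + 1 : ℝ) := by
        rw [Real.rpow_add hz.1, Real.rpow_add hp, Real.rpow_add hp, Real.rpow_one,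
          homogeneousSolution, integrand, Real.sqrt_eq_rpow]
        ring
    _ = 1 := by norm_num

end Eq27

open Eq27 in
/-- The general solution of equation (27) on `(0,1)`: for any constant `C`
and base point `z₁ ∈ (0,1)`, the function
`v(z) = √z (1-z²)^{-1/4} (C + ∫_{z₁}^z s^{-1/2} (1-s²)^{-3/4} ds)`
is differentiable on `(0,1)` and satisfies `2 z (1-z²) v'(z) = v(z) + 2z`. -/
theorem general_solution_eq27
    (C z₁ : ℝ) (hz₁ : z₁ ∈ Set.Ioo (0 : ℝ) 1)
    (v : ℝ → ℝ)
    (hv : v = fun z => Real.sqrt z * (1 - z ^ 2) ^ (-(1 / 4 : ℝ)) *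
      (C + ∫ s in z₁..z, s ^ (-(1 / 2 : ℝ)) * (1 - s ^ 2) ^ (-(3 / 4 : ℝ)))) :
    ∀ z ∈ Set.Ioo (0 : ℝ) 1,
      DifferentiableAt ℝ v z ∧
      2 * z * (1 - z ^ 2) * deriv v z = v z + 2 * z := by
  intro z hz
  have hv' : v = fun t => homogeneousSolution t * (C + ∫ s in z₁..t, integrand s) := hv
  have hG := hasDerivAt_integral_of_continuousOn continuousOn_integrand isOpen_Ioo
    Set.ordConnected_Ioo hz₁ hz
  have hV : HasDerivAt v (homogeneousSolution z / (2 * z * (1 - z ^ 2)) *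
      (C + ∫ s in z₁..z, integrand s) + homogeneousSolution z * integrand z) z := by
    rw [hv']
    exact (hasDerivAt_homogeneousSolution hz).mul (hG.const_add C)
  refine ⟨hV.differentiableAt, ?_⟩
  have hz0 : z ≠ 0 := hz.1.ne'
  have hp : 1 - z ^ 2 ≠ 0 := (one_sub_sq_pos hz).ne'
  rw [hV.deriv, hv']
  field_simp
  linear_combination 2 * z * homogeneousSolution_mul_integrand hz
end

section
/- Fix ℓ > 0 and define, for r > ℓ: a(r) = (1/2)√((r+3ℓ)(r−ℓ)), b(r) = −ℓ√((r+3ℓ)(r−ℓ))/(r+ℓ), c(r) = √((r²−ℓ²)/2), and h(r) = (r+ℓ)/√((r+3ℓ)(r−ℓ)). Then a, b, c, h satisfy the first-order system (15) in h-form on the interval (ℓ, ∞). (These are the metric functions of the Spin(7) metric (35) on the manifold 𝔸₈ of topology ℝ⁸.) -/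
/-! With `s = √((r+3ℓ)(r-ℓ))` one has `s' = (r+ℓ)/s = h`, so multiplying by `1/h = s/(r+ℓ)` turns
every derivative into a rational expression in `r`, `ℓ`, `s` and `c`. All three equations then
reduce to the single polynomial relation `(r+ℓ) s² = 2 (r+3ℓ) c²`, i.e.
`(r+ℓ)(r+3ℓ)(r-ℓ) = (r+3ℓ)(r²-ℓ²)`. -/

open Real

section

variable {ℓ r : ℝ}

theorem hasDerivAt_sqrt_add_three_mul_mul_sub (hP : 0 < (r + 3 * ℓ) * (r - ℓ)) :
    HasDerivAt (fun x => √((x + 3 * ℓ) * (x - ℓ))) ((r + ℓ) / √((r + 3 * ℓ) * (r - ℓ))) r := by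
  have hpoly : HasDerivAt (fun x => (x + 3 * ℓ) * (x - ℓ)) (1 * (r - ℓ) + (r + 3 * ℓ) * 1) r :=
    ((hasDerivAt_id r).add_const _).mul ((hasDerivAt_id r).sub_const _)
  convert hpoly.sqrt hP.ne' using 1
  ring

theorem hasDerivAt_neg_mul_sqrt_add_three_mul_mul_sub_div_add (hP : 0 < (r + 3 * ℓ) * (r - ℓ)) (hrℓ : 0 < r + ℓ) :
    HasDerivAt (fun x => -ℓ * √((x + 3 * ℓ) * (x - ℓ)) / (x + ℓ))
      (-4 * ℓ ^ 3 / (√((r + 3 * ℓ) * (r - ℓ)) * (r + ℓ) ^ 2)) r := by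
  refine (((hasDerivAt_sqrt_add_three_mul_mul_sub hP).const_mul (-ℓ)).div
    ((hasDerivAt_id' r).add_const ℓ) hrℓ.ne').congr_deriv ?_
  have hs := sqrt_pos.mpr hP
  have hs2 := sq_sqrt hP.le
  generalize √((r + 3 * ℓ) * (r - ℓ)) = s at hs hs2 ⊢
  field_simp
  linear_combination ℓ * hs2

theorem hasDerivAt_sqrt_sq_sub_sq_div_two (hQ : 0 < (r ^ 2 - ℓ ^ 2) / 2) :
    HasDerivAt (fun x => √((x ^ 2 - ℓ ^ 2) / 2)) (r / (2 * √((r ^ 2 - ℓ ^ 2) / 2))) r := by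
  have hpoly : HasDerivAt (fun x => (x ^ 2 - ℓ ^ 2) / 2) (2 * r / 2) r := by
    simpa using ((hasDerivAt_pow 2 r).sub_const (ℓ ^ 2)).div_const 2
  convert hpoly.sqrt hQ.ne' using 1
  ring

end

/-- The metric functions of the new Spin(7) metric (35) on the manifold `𝔸₈`
(topologically `ℝ⁸`): for `ℓ > 0` and `r > ℓ`,
`a = (1/2)√((r+3ℓ)(r-ℓ))`, `b = -ℓ√((r+3ℓ)(r-ℓ))/(r+ℓ)`,
`c = √((r²-ℓ²)/2)`, `h = (r+ℓ)/√((r+3ℓ)(r-ℓ))`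
satisfy the first-order system (15) in `h`-form:
`(1/h) a' = 1 - b/(2a) - a²/c²`, `(1/h) b' = b²/(2a²) - b²/c²`,
`(1/h) c' = a/c + b/(2c)`. -/
theorem A8_solves_firstOrderSystem
    (ℓ : ℝ) (hℓ : 0 < ℓ)
    (a b c h : ℝ → ℝ)
    (hadef : a = fun r => (1 / 2) * Real.sqrt ((r + 3 * ℓ) * (r - ℓ)))
    (hbdef : b = fun r => -ℓ * Real.sqrt ((r + 3 * ℓ) * (r - ℓ)) / (r + ℓ))
    (hcdef : c = fun r => Real.sqrt ((r ^ 2 - ℓ ^ 2) / 2))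
    (hhdef : h = fun r => (r + ℓ) / Real.sqrt ((r + 3 * ℓ) * (r - ℓ))) :
    ∀ r ∈ Set.Ioi ℓ,
      (1 / h r) * deriv a r = 1 - b r / (2 * a r) - (a r) ^ 2 / (c r) ^ 2 ∧
      (1 / h r) * deriv b r = (b r) ^ 2 / (2 * (a r) ^ 2) - (b r) ^ 2 / (c r) ^ 2 ∧
      (1 / h r) * deriv c r = a r / c r + b r / (2 * c r) := by
  intro r (hr : ℓ < r)
  subst hadef hbdef hcdef hhdef
  have hrℓ : 0 < r + ℓ := by linarith
  have hP : 0 < (r + 3 * ℓ) * (r - ℓ) := mul_pos (by linarith) (by linarith)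
  have hQ : 0 < (r ^ 2 - ℓ ^ 2) / 2 := by nlinarith
  rw [((hasDerivAt_sqrt_add_three_mul_mul_sub hP).const_mul (1 / 2)).deriv,
    (hasDerivAt_neg_mul_sqrt_add_three_mul_mul_sub_div_add hP hrℓ).deriv, (hasDerivAt_sqrt_sq_sub_sq_div_two hQ).deriv]
  beta_reduce
  have hs := sqrt_pos.mpr hP
  have ht := sqrt_pos.mpr hQ
  have hs2 := sq_sqrt hP.le
  have ht2 := sq_sqrt hQ.le
  generalize √((r + 3 * ℓ) * (r - ℓ)) = s at *
  generalize √((r ^ 2 - ℓ ^ 2) / 2) = t at *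
  have hkey : (r + ℓ) * s ^ 2 = 2 * (r + 3 * ℓ) * t ^ 2 := by
    linear_combination (r + ℓ) * hs2 - 2 * (r + 3 * ℓ) * ht2
  refine ⟨?_, ?_, ?_⟩ <;> field_simp
  · linear_combination hkey
  · linear_combination hkey
  · ring
end

section
/- Fix ℓ > 0 and define, for r > 3ℓ: a(r) = (1/2)√((r−3ℓ)(r+ℓ)), b(r) = ℓ√((r−3ℓ)(r+ℓ))/(r−ℓ), c(r) = √((r²−ℓ²)/2), and h(r) = (r−ℓ)/√((r−3ℓ)(r+ℓ)). Then a, b, c, h satisfy the first-order system (15) in h-form on the interval (3ℓ, ∞). (These are the metric functions of the Spin(7) metric (37) on the manifold 𝔹₈, the bundle of chiral spinors over S⁴.) -/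
/-!
Write `s = √((r - 3ℓ)(r + ℓ))`, so that `h = (r - ℓ)/s`, `s' = (r - ℓ)/s` and `(r - ℓ)² - s² = 4ℓ²`.
Then `(1/h) a' = 1/2`, `(1/h) b' = 4ℓ³/(r - ℓ)³` and `(1/h) c' = r s/(2 (r - ℓ) c)`, and the right-hand
sides of the system reduce to the same expressions once `s²` and `c² = (r² - ℓ²)/2` are substituted.
-/

open Real

namespace B8Metric

variable {ℓ r : ℝ}

section
variable (ℓ)

noncomputable def s (r : ℝ) : ℝ := √((r - 3 * ℓ) * (r + ℓ))
noncomputable def a (r : ℝ) : ℝ := 1 / 2 * s ℓ r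
noncomputable def b (r : ℝ) : ℝ := ℓ * s ℓ r / (r - ℓ)
noncomputable def c (r : ℝ) : ℝ := √((r ^ 2 - ℓ ^ 2) / 2)
noncomputable def h (r : ℝ) : ℝ := (r - ℓ) / s ℓ r

end

variable (hℓ : 0 < ℓ) (hr : 3 * ℓ < r)
include hℓ hr

lemma radicand_pos : 0 < (r - 3 * ℓ) * (r + ℓ) := mul_pos (by linarith) (by linarith)

lemma s_sq : s ℓ r ^ 2 = (r - 3 * ℓ) * (r + ℓ) := sq_sqrt (radicand_pos hℓ hr).le

lemma s_pos : 0 < s ℓ r := sqrt_pos.mpr (radicand_pos hℓ hr)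

lemma c_sq : c ℓ r ^ 2 = (r ^ 2 - ℓ ^ 2) / 2 := sq_sqrt (by nlinarith)

lemma c_pos : 0 < c ℓ r := sqrt_pos.mpr (by nlinarith)

lemma hasDerivAt_s : HasDerivAt (s ℓ) ((r - ℓ) / s ℓ r) r := by
  have hP : HasDerivAt (fun x => (x - 3 * ℓ) * (x + ℓ)) (2 * (r - ℓ)) r :=
    (((hasDerivAt_id r).sub_const _).mul ((hasDerivAt_id r).add_const _)).congr_deriv
      (by simp only [id]; ring)
  refine (hP.sqrt (radicand_pos hℓ hr).ne').congr_deriv ?_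
  rw [s]
  field_simp

lemma hasDerivAt_a : HasDerivAt (a ℓ) ((r - ℓ) / (2 * s ℓ r)) r :=
  ((hasDerivAt_s hℓ hr).const_mul (1 / 2)).congr_deriv (by ring)

lemma hasDerivAt_b : HasDerivAt (b ℓ) (4 * ℓ ^ 3 / (s ℓ r * (r - ℓ) ^ 2)) r := by
  have hs := s_pos hℓ hr
  have hrℓ : r - ℓ ≠ 0 := by linarith
  refine (((hasDerivAt_s hℓ hr).const_mul ℓ).div ((hasDerivAt_id r).sub_const ℓ) hrℓ).congr_deriv ?_
  simp only [id]
  field_simp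
  linear_combination -s_sq hℓ hr

lemma hasDerivAt_c : HasDerivAt (c ℓ) (r / (2 * c ℓ r)) r := by
  have hq : HasDerivAt (fun x : ℝ => (x ^ 2 - ℓ ^ 2) / 2) r r :=
    (((hasDerivAt_pow 2 r).sub_const (ℓ ^ 2)).div_const 2).congr_deriv (by ring)
  exact hq.sqrt (by nlinarith)

lemma inv_h_mul_deriv_a :
    1 / h ℓ r * deriv (a ℓ) r = 1 - b ℓ r / (2 * a ℓ r) - a ℓ r ^ 2 / c ℓ r ^ 2 := by
  have hs := s_pos hℓ hr
  have hrℓ : r - ℓ ≠ 0 := by linarith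
  have hrℓ' : r ^ 2 - ℓ ^ 2 ≠ 0 := by nlinarith
  rw [(hasDerivAt_a hℓ hr).deriv, c_sq hℓ hr]
  simp only [a, b, h]
  field_simp
  linear_combination (r - ℓ) * s_sq hℓ hr

lemma inv_h_mul_deriv_b :
    1 / h ℓ r * deriv (b ℓ) r = b ℓ r ^ 2 / (2 * a ℓ r ^ 2) - b ℓ r ^ 2 / c ℓ r ^ 2 := by
  have hs := s_pos hℓ hr
  have hrℓ : r - ℓ ≠ 0 := by linarith
  have hrℓ' : r ^ 2 - ℓ ^ 2 ≠ 0 := by nlinarith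
  rw [(hasDerivAt_b hℓ hr).deriv, c_sq hℓ hr]
  simp only [a, b, h]
  field_simp
  linear_combination 2 * (r - ℓ) * s_sq hℓ hr

lemma inv_h_mul_deriv_c :
    1 / h ℓ r * deriv (c ℓ) r = a ℓ r / c ℓ r + b ℓ r / (2 * c ℓ r) := by
  have hs := s_pos hℓ hr
  have hc := c_pos hℓ hr
  have hrℓ : r - ℓ ≠ 0 := by linarith
  rw [(hasDerivAt_c hℓ hr).deriv]
  simp only [a, b, h]
  field_simp
  ring

end B8Metric

/-- The metric functions of the new Spin(7) metric (37) on the manifold `𝔹₈`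
(the bundle of chiral spinors over `S⁴`): for `ℓ > 0` and `r > 3ℓ`,
`a = (1/2)√((r-3ℓ)(r+ℓ))`, `b = ℓ√((r-3ℓ)(r+ℓ))/(r-ℓ)`,
`c = √((r²-ℓ²)/2)`, `h = (r-ℓ)/√((r-3ℓ)(r+ℓ))`
satisfy the first-order system (15) in `h`-form:
`(1/h) a' = 1 - b/(2a) - a²/c²`, `(1/h) b' = b²/(2a²) - b²/c²`,
`(1/h) c' = a/c + b/(2c)`. -/
theorem B8_solves_firstOrderSystem
    (ℓ : ℝ) (hℓ : 0 < ℓ)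
    (a b c h : ℝ → ℝ)
    (hadef : a = fun r => (1 / 2) * Real.sqrt ((r - 3 * ℓ) * (r + ℓ)))
    (hbdef : b = fun r => ℓ * Real.sqrt ((r - 3 * ℓ) * (r + ℓ)) / (r - ℓ))
    (hcdef : c = fun r => Real.sqrt ((r ^ 2 - ℓ ^ 2) / 2))
    (hhdef : h = fun r => (r - ℓ) / Real.sqrt ((r - 3 * ℓ) * (r + ℓ))) :
    ∀ r ∈ Set.Ioi (3 * ℓ),
      (1 / h r) * deriv a r = 1 - b r / (2 * a r) - (a r) ^ 2 / (c r) ^ 2 ∧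
      (1 / h r) * deriv b r = (b r) ^ 2 / (2 * (a r) ^ 2) - (b r) ^ 2 / (c r) ^ 2 ∧
      (1 / h r) * deriv c r = a r / c r + b r / (2 * c r) := by
  subst hadef hbdef hcdef hhdef
  intro r hr
  exact ⟨B8Metric.inv_h_mul_deriv_a hℓ hr, B8Metric.inv_h_mul_deriv_b hℓ hr,
    B8Metric.inv_h_mul_deriv_c hℓ hr⟩
end

section
/- Let a, b, c be differentiable real-valued functions on an open interval I, with a and c nowhere zero, satisfying the first-order system (15) in the variable t, and suppose b(t) = −a(t) for all t ∈ I. Then a(t)² = c(t)² and a'(t) = 1/2 for all t ∈ I; consequently a(t) = (t − t₀)/2 for some constant t₀. (This is the flat-space solution a = −b = ±c = t/2 of the Spin(7) gradient flow.) -/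
/-!
Substituting `b = -a` into the equations for `a'` and `b'` and adding them eliminates the
derivative and leaves `2 - 2 a²/c² = 0`, so `a² = c²`; then the equation for `a'` reads
`a' = 1 + 1/2 - 1 = 1/2`, and a function with constant derivative on an interval is affine.
-/

theorem sq_eq_sq_and_eq_half_of_flow {x y d : ℝ} (hx : x ≠ 0) (hy : y ≠ 0)
    (ha : d = 1 - -x / (2 * x) - x ^ 2 / y ^ 2)
    (hb : -d = (-x) ^ 2 / (2 * x ^ 2) - (-x) ^ 2 / y ^ 2) :
    x ^ 2 = y ^ 2 ∧ d = 1 / 2 := by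
  rw [neg_sq] at hb
  have hlin : -x / (2 * x) = -1 / 2 := by field_simp
  have hquad : x ^ 2 / (2 * x ^ 2) = 1 / 2 := by field_simp
  have hratio : x ^ 2 / y ^ 2 = 1 := by linarith
  refine ⟨(div_eq_one_iff_eq (pow_ne_zero 2 hy)).mp hratio, ?_⟩
  linarith

theorem deriv_eq_neg_of_eqOn_neg {𝕜 F : Type*} [NontriviallyNormedField 𝕜]
    [NormedAddCommGroup F] [NormedSpace 𝕜 F] {s : Set 𝕜} (hs : IsOpen s) {f g : 𝕜 → F}
    (h : ∀ t ∈ s, g t = -f t) {t : 𝕜} (ht : t ∈ s) : deriv g t = -deriv f t := by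
  rw [(Filter.eventuallyEq_of_mem (hs.mem_nhds ht) h).deriv_eq, deriv.fun_neg]

theorem flat_space_solution_general
    (I : Set ℝ) (hI : IsOpen I) (hI' : I.OrdConnected)
    (a b c : ℝ → ℝ)
    (ha : DifferentiableOn ℝ a I)
    (hane : ∀ t ∈ I, a t ≠ 0) (hcne : ∀ t ∈ I, c t ≠ 0)
    (heqa : ∀ t ∈ I, deriv a t = 1 - b t / (2 * a t) - (a t) ^ 2 / (c t) ^ 2)
    (heqb : ∀ t ∈ I, deriv b t = (b t) ^ 2 / (2 * (a t) ^ 2) - (b t) ^ 2 / (c t) ^ 2)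
    (hba : ∀ t ∈ I, b t = -a t) :
    (∀ t ∈ I, (a t) ^ 2 = (c t) ^ 2 ∧ deriv a t = 1 / 2) ∧
    ∃ t₀ : ℝ, ∀ t ∈ I, a t = (t - t₀) / 2 := by
  have hpointwise : ∀ t ∈ I, (a t) ^ 2 = (c t) ^ 2 ∧ deriv a t = 1 / 2 := by
    intro t ht
    refine sq_eq_sq_and_eq_half_of_flow (hane t ht) (hcne t ht) ?_ ?_
    · rw [← hba t ht]; exact heqa t ht
    · rw [← deriv_eq_neg_of_eqOn_neg hI hba ht, ← hba t ht]; exact heqb t ht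
  refine ⟨hpointwise, ?_⟩
  obtain ⟨C, hC⟩ := hI.exists_eq_add_of_deriv_eq hI'.isPreconnected ha
    (g := fun t => t / 2) (differentiableOn_id.div_const 2)
    (fun t ht => by simp [(hpointwise t ht).2])
  exact ⟨-2 * C, fun t ht => by rw [hC ht]; ring⟩

/-- The flat-space solution `a = -b = ±c = t/2` of the Spin(7) gradient flow:
if differentiable `a`, `b`, `c` on an open interval `I` (with `a`, `c`
nowhere zero) satisfy the first-order system (15) in `t` and `b = -a`, then
`a² = c²` and `a' = 1/2` on `I`; consequently `a(t) = (t - t₀)/2` for some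
constant `t₀`. -/
theorem flat_space_solution
    (I : Set ℝ) (hI : IsOpen I) (hI' : I.OrdConnected)
    (a b c : ℝ → ℝ)
    (ha : DifferentiableOn ℝ a I) (hb : DifferentiableOn ℝ b I)
    (hc : DifferentiableOn ℝ c I)
    (hane : ∀ t ∈ I, a t ≠ 0) (hcne : ∀ t ∈ I, c t ≠ 0)
    (heqa : ∀ t ∈ I, deriv a t = 1 - b t / (2 * a t) - (a t) ^ 2 / (c t) ^ 2)
    (heqb : ∀ t ∈ I, deriv b t = (b t) ^ 2 / (2 * (a t) ^ 2) - (b t) ^ 2 / (c t) ^ 2)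
    (heqc : ∀ t ∈ I, deriv c t = a t / c t + b t / (2 * c t))
    (hba : ∀ t ∈ I, b t = -a t) :
    (∀ t ∈ I, (a t) ^ 2 = (c t) ^ 2 ∧ deriv a t = 1 / 2) ∧
    ∃ t₀ : ℝ, ∀ t ∈ I, a t = (t - t₀) / 2 :=
  flat_space_solution_general I hI hI' a b c ha hane hcne heqa heqb hba
end

section
/- Define the superpotential W(a,b,c) = b c² (4a³ + 2a²b + 4ac² − bc²) and set A = a·∂W/∂a, B = b·∂W/∂b, C = c·∂W/∂c. Then for all real numbers a, b, c one has the polynomial identity (1/768)·(64 A² + 160 B² + 16 C² − 64 AB − 64 AC − 64 BC) = (1/2) b² c⁴ (4a⁶ + 2a⁴b² − 24a⁴c² − 4a²c⁴ + b²c⁴). (This expresses that V = −(1/2) g^{ij} ∂W/∂α^i ∂W/∂α^j for the potential V and the DeWitt metric g_{ij} defined by the kinetic energy T = 2α'² + 12γ'² + 4α'β' + 8β'γ' + 16α'γ' with α = log a, β = log b, γ = log c.) -/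
def superpotential (a b c : ℝ) : ℝ :=
  b * c ^ 2 * (4 * a ^ 3 + 2 * a ^ 2 * b + 4 * a * c ^ 2 - b * c ^ 2)

theorem hasDerivAt_superpotential_fst (a b c : ℝ) :
    HasDerivAt (fun x => superpotential x b c)
      (b * c ^ 2 * (12 * a ^ 2 + 4 * a * b + 4 * c ^ 2)) a := by
  have h := (((((hasDerivAt_pow 3 a).const_mul 4).fun_add
    (((hasDerivAt_pow 2 a).const_mul 2).mul_const b)).fun_add
    (((hasDerivAt_id' a).const_mul 4).mul_const (c ^ 2))).sub_const (b * c ^ 2)).const_mul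
    (b * c ^ 2)
  refine h.congr_deriv ?_
  push_cast
  ring

theorem hasDerivAt_superpotential_snd (a b c : ℝ) :
    HasDerivAt (fun x => superpotential a x c)
      (c ^ 2 * (4 * a ^ 3 + 4 * a ^ 2 * b + 4 * a * c ^ 2 - 2 * b * c ^ 2)) b := by
  have h := ((hasDerivAt_id' b).mul_const (c ^ 2)).fun_mul
    ((((hasDerivAt_id' b).const_mul (2 * a ^ 2)).const_add (4 * a ^ 3)).add_const (4 * a * c ^ 2)
      |>.fun_sub ((hasDerivAt_id' b).mul_const (c ^ 2)))
  refine h.congr_deriv ?_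
  ring

theorem hasDerivAt_superpotential_thd (a b c : ℝ) :
    HasDerivAt (fun x => superpotential a b x)
      (2 * b * c * (4 * a ^ 3 + 2 * a ^ 2 * b + 8 * a * c ^ 2 - 2 * b * c ^ 2)) c := by
  have h := ((hasDerivAt_pow 2 c).const_mul b).fun_mul
    ((((hasDerivAt_pow 2 c).const_mul (4 * a)).const_add (4 * a ^ 3 + 2 * a ^ 2 * b)).fun_sub
      ((hasDerivAt_pow 2 c).const_mul b))
  refine h.congr_deriv ?_
  push_cast
  ring

/-- The superpotential `W(a,b,c) = b c² (4a³ + 2a²b + 4ac² - bc²)` reproduces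
the potential `V = (1/2) b² c⁴ (4a⁶ + 2a⁴b² - 24a⁴c² - 4a²c⁴ + b²c⁴)`:
with `A = a ∂W/∂a`, `B = b ∂W/∂b`, `C = c ∂W/∂c`, one has the polynomial
identity `(1/768)(64A² + 160B² + 16C² - 64AB - 64AC - 64BC) = V`
for all real `a`, `b`, `c`. -/
theorem superpotential_identity
    (W : ℝ → ℝ → ℝ → ℝ)
    (hW : W = fun a b c => b * c ^ 2 * (4 * a ^ 3 + 2 * a ^ 2 * b + 4 * a * c ^ 2 - b * c ^ 2))
    (a b c : ℝ)
    (A B C : ℝ)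
    (hA : A = a * deriv (fun x => W x b c) a)
    (hB : B = b * deriv (fun x => W a x c) b)
    (hC : C = c * deriv (fun x => W a b x) c) :
    (1 / 768) * (64 * A ^ 2 + 160 * B ^ 2 + 16 * C ^ 2
        - 64 * A * B - 64 * A * C - 64 * B * C)
      = (1 / 2) * b ^ 2 * c ^ 4 *
          (4 * a ^ 6 + 2 * a ^ 4 * b ^ 2 - 24 * a ^ 4 * c ^ 2
            - 4 * a ^ 2 * c ^ 4 + b ^ 2 * c ^ 4) := by
  obtain rfl : W = superpotential := hW
  rw [hA, hB, hC, (hasDerivAt_superpotential_fst a b c).deriv,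
    (hasDerivAt_superpotential_snd a b c).deriv, (hasDerivAt_superpotential_thd a b c).deriv]
  ring
end

section
/- Let a, b, c be differentiable real-valued functions on an open interval I, nowhere zero, satisfying the first-order system (15) in the variable t. Define α' := a b c⁴ a', β' := a² c⁴ b', γ' := a² b c³ c' (these are the ρ-derivatives of log a, log b, log c for dt = a²bc⁴ dρ). Then the zero-energy condition T + V = 0 holds identically on I, i.e. 2α'² + 12γ'² + 4α'β' + 8β'γ' + 16α'γ' + (1/2) b² c⁴ (4a⁶ + 2a⁴b² − 24a⁴c² − 4a²c⁴ + b²c⁴) = 0 at every point of I. -/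
/-- The zero-energy condition `T + V = 0` along the gradient flow: if
nowhere-zero differentiable `a`, `b`, `c` on an open interval `I` satisfy the
first-order system (15) in `t`, then with the `ρ`-derivatives
`α' = a b c⁴ a'`, `β' = a² c⁴ b'`, `γ' = a² b c³ c'` one has
`2α'² + 12γ'² + 4α'β' + 8β'γ' + 16α'γ'
  + (1/2) b² c⁴ (4a⁶ + 2a⁴b² - 24a⁴c² - 4a²c⁴ + b²c⁴) = 0` on `I`. -/
theorem zero_energy_condition
    (I : Set ℝ) (hI : IsOpen I) (hI' : I.OrdConnected)
    (a b c : ℝ → ℝ)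
    (ha : DifferentiableOn ℝ a I) (hb : DifferentiableOn ℝ b I)
    (hc : DifferentiableOn ℝ c I)
    (hane : ∀ t ∈ I, a t ≠ 0) (hbne : ∀ t ∈ I, b t ≠ 0)
    (hcne : ∀ t ∈ I, c t ≠ 0)
    (heqa : ∀ t ∈ I, deriv a t = 1 - b t / (2 * a t) - (a t) ^ 2 / (c t) ^ 2)
    (heqb : ∀ t ∈ I, deriv b t = (b t) ^ 2 / (2 * (a t) ^ 2) - (b t) ^ 2 / (c t) ^ 2)
    (heqc : ∀ t ∈ I, deriv c t = a t / c t + b t / (2 * c t))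
    (A B Γ : ℝ → ℝ)
    (hA : A = fun t => a t * b t * (c t) ^ 4 * deriv a t)
    (hB : B = fun t => (a t) ^ 2 * (c t) ^ 4 * deriv b t)
    (hΓ : Γ = fun t => (a t) ^ 2 * b t * (c t) ^ 3 * deriv c t) :
    ∀ t ∈ I,
      2 * (A t) ^ 2 + 12 * (Γ t) ^ 2 + 4 * A t * B t + 8 * B t * Γ t
          + 16 * A t * Γ t
        + (1 / 2) * (b t) ^ 2 * (c t) ^ 4 *
            (4 * (a t) ^ 6 + 2 * (a t) ^ 4 * (b t) ^ 2
              - 24 * (a t) ^ 4 * (c t) ^ 2 - 4 * (a t) ^ 2 * (c t) ^ 4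
              + (b t) ^ 2 * (c t) ^ 4) = 0 := by
  intro t ht
  subst hA hB hΓ
  simp only
  rw [heqa t ht, heqb t ht, heqc t ht]
  have h1 := hane t ht
  have h2 := hbne t ht
  have h3 := hcne t ht
  field_simp
  ring
end

section
/- Let a(r) = (1/2)√((r+3)(r−1)), b(r) = −√((r+3)(r−1))/(r+1), c(r) = √((r²−1)/2), h(r) = (r+1)/√((r+3)(r−1)) be the 𝔸₈ metric functions on (1, ∞), and define u₁(r) = 2/((r+1)³(r+3)), u₂(r) = −(r²+10r+13)/((r+1)³(r+3)³), u₃(r) = −2/((r+1)²(r+3)³). Then for all r > 1 the harmonic 4-form equations (55) hold: (1/h)(c⁴u₁)' − 2bc²u₂ + 4ac²u₃ = 0, (1/h)(a²c²u₂)' − a²b u₁ + bc²u₂ + 2ac²u₃ = 0, and (1/h)(abc²u₃)' + a²b u₁ + bc²u₂ = 0, primes denoting d/dr. (These u_i define the L²-normalisable harmonic 4-form of the Spin(7) manifold 𝔸₈ whose duality is opposite to that of the Cayley form.) -/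
/-! On `(1, ∞)` put `S = √((r+3)(r-1))`, so that `a = S/2`, `b = -S/(r+1)`, `1/h = S/(r+1)` and
`c² = (r²-1)/2`. In `c⁴u₁`, `a²c²u₂` and `abc²u₃` the factors of `S` pair up into
`S² = (r+3)(r-1)`, so the three differentiated quantities are rational functions of `r`.
Every term of each equation is then `S` times a rational function, and the equations reduce to
rational identities. -/

open Real Set

namespace A8

noncomputable def a (r : ℝ) : ℝ := 1 / 2 * √((r + 3) * (r - 1))
noncomputable def b (r : ℝ) : ℝ := -√((r + 3) * (r - 1)) / (r + 1)
noncomputable def c (r : ℝ) : ℝ := √((r ^ 2 - 1) / 2)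
noncomputable def h (r : ℝ) : ℝ := (r + 1) / √((r + 3) * (r - 1))
noncomputable def u₁ (r : ℝ) : ℝ := 2 / ((r + 1) ^ 3 * (r + 3))
noncomputable def u₂ (r : ℝ) : ℝ := -(r ^ 2 + 10 * r + 13) / ((r + 1) ^ 3 * (r + 3) ^ 3)
noncomputable def u₃ (r : ℝ) : ℝ := -2 / ((r + 1) ^ 2 * (r + 3) ^ 3)

variable {r : ℝ}

theorem sq_c (hr : 1 < r) : c r ^ 2 = (r ^ 2 - 1) / 2 :=
  sq_sqrt (by nlinarith)

theorem sq_a (hr : 1 < r) : a r ^ 2 = (r + 3) * (r - 1) / 4 := by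
  rw [a, mul_pow, sq_sqrt (by nlinarith)]
  ring

theorem a_mul_b (hr : 1 < r) : a r * b r = -((r + 3) * (r - 1)) / (2 * (r + 1)) := by
  calc a r * b r = -(√((r + 3) * (r - 1)) * √((r + 3) * (r - 1))) / (2 * (r + 1)) := by
        rw [a, b]; field_simp
    _ = _ := by rw [mul_self_sqrt (by nlinarith)]

theorem c_pow_four_mul_u₁ (hr : 1 < r) :
    c r ^ 4 * u₁ r = (r - 1) ^ 2 / (2 * (r + 1) * (r + 3)) := by
  have h1 : r + 1 ≠ 0 := by linarith
  have h3 : r + 3 ≠ 0 := by linarith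
  rw [show c r ^ 4 = (c r ^ 2) ^ 2 by ring, sq_c hr, u₁]
  field_simp
  ring

theorem sq_a_mul_sq_c_mul_u₂ (hr : 1 < r) :
    a r ^ 2 * c r ^ 2 * u₂ r
      = -(r ^ 2 + 10 * r + 13) * (r - 1) ^ 2 / (8 * (r + 1) ^ 2 * (r + 3) ^ 2) := by
  have h1 : r + 1 ≠ 0 := by linarith
  have h3 : r + 3 ≠ 0 := by linarith
  rw [sq_a hr, sq_c hr, u₂]
  field_simp
  ring

theorem a_mul_b_mul_sq_c_mul_u₃ (hr : 1 < r) :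
    a r * b r * c r ^ 2 * u₃ r = (r - 1) ^ 2 / (2 * (r + 1) ^ 2 * (r + 3) ^ 2) := by
  have h1 : r + 1 ≠ 0 := by linarith
  have h3 : r + 3 ≠ 0 := by linarith
  rw [a_mul_b hr, sq_c hr, u₃]
  field_simp
  ring

theorem deriv_c_pow_four_mul_u₁ (hr : 1 < r) :
    deriv (fun s => c s ^ 4 * u₁ s) r = (r - 1) * (3 * r + 5) / ((r + 1) ^ 2 * (r + 3) ^ 2) := by
  have h1 : r + 1 ≠ 0 := by linarith
  have h3 : r + 3 ≠ 0 := by linarith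
  have hR : HasDerivAt (fun s => (s - 1) ^ 2 / (2 * (s + 1) * (s + 3)))
      ((r - 1) * (3 * r + 5) / ((r + 1) ^ 2 * (r + 3) ^ 2)) r := by
    refine ((((hasDerivAt_id' r).sub_const 1).fun_pow 2).fun_div
      ((((hasDerivAt_id' r).add_const 1).const_mul 2).fun_mul ((hasDerivAt_id' r).add_const 3))
      (by simp [h1, h3])).congr_deriv ?_
    field_simp
    ring
  refine (hR.congr_of_eventuallyEq ?_).deriv
  filter_upwards [Ioi_mem_nhds hr] with s hs using c_pow_four_mul_u₁ hs

theorem deriv_sq_a_mul_sq_c_mul_u₂ (hr : 1 < r) :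
    deriv (fun s => a s ^ 2 * c s ^ 2 * u₂ s) r
      = -(r - 1) * (7 * r ^ 2 + 22 * r + 19) / ((r + 1) ^ 3 * (r + 3) ^ 3) := by
  have h1 : r + 1 ≠ 0 := by linarith
  have h3 : r + 3 ≠ 0 := by linarith
  have hR : HasDerivAt
      (fun s => -(s ^ 2 + 10 * s + 13) * (s - 1) ^ 2 / (8 * (s + 1) ^ 2 * (s + 3) ^ 2))
      (-(r - 1) * (7 * r ^ 2 + 22 * r + 19) / ((r + 1) ^ 3 * (r + 3) ^ 3)) r := by
    refine ((((((hasDerivAt_id' r).fun_pow 2).fun_add ((hasDerivAt_id' r).const_mul 10)).add_const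
      13).fun_neg.fun_mul (((hasDerivAt_id' r).sub_const 1).fun_pow 2)).fun_div
      (((((hasDerivAt_id' r).add_const 1).fun_pow 2).const_mul 8).fun_mul
        (((hasDerivAt_id' r).add_const 3).fun_pow 2)) (by simp [h1, h3])).congr_deriv ?_
    field_simp
    ring
  refine (hR.congr_of_eventuallyEq ?_).deriv
  filter_upwards [Ioi_mem_nhds hr] with s hs using sq_a_mul_sq_c_mul_u₂ hs

theorem deriv_a_mul_b_mul_sq_c_mul_u₃ (hr : 1 < r) :
    deriv (fun s => a s * b s * c s ^ 2 * u₃ s) r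
      = (r - 1) * (7 + 2 * r - r ^ 2) / ((r + 1) ^ 3 * (r + 3) ^ 3) := by
  have h1 : r + 1 ≠ 0 := by linarith
  have h3 : r + 3 ≠ 0 := by linarith
  have hR : HasDerivAt (fun s => (s - 1) ^ 2 / (2 * (s + 1) ^ 2 * (s + 3) ^ 2))
      ((r - 1) * (7 + 2 * r - r ^ 2) / ((r + 1) ^ 3 * (r + 3) ^ 3)) r := by
    refine ((((hasDerivAt_id' r).sub_const 1).fun_pow 2).fun_div
      (((((hasDerivAt_id' r).add_const 1).fun_pow 2).const_mul 2).fun_mul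
        (((hasDerivAt_id' r).add_const 3).fun_pow 2)) (by simp [h1, h3])).congr_deriv ?_
    field_simp
    ring
  refine (hR.congr_of_eventuallyEq ?_).deriv
  filter_upwards [Ioi_mem_nhds hr] with s hs using a_mul_b_mul_sq_c_mul_u₃ hs

theorem closure_eq₁ (hr : 1 < r) :
    (1 / h r) * deriv (fun s => c s ^ 4 * u₁ s) r
      - 2 * b r * c r ^ 2 * u₂ r + 4 * a r * c r ^ 2 * u₃ r = 0 := by
  have h1 : r + 1 ≠ 0 := by linarith
  have h3 : r + 3 ≠ 0 := by linarith
  have hS : √((r + 3) * (r - 1)) ≠ 0 := (sqrt_pos.2 (by nlinarith)).ne'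
  rw [deriv_c_pow_four_mul_u₁ hr, sq_c hr, a, b, h, u₂, u₃]
  field_simp
  ring

theorem closure_eq₂ (hr : 1 < r) :
    (1 / h r) * deriv (fun s => a s ^ 2 * c s ^ 2 * u₂ s) r
      - a r ^ 2 * b r * u₁ r + b r * c r ^ 2 * u₂ r + 2 * a r * c r ^ 2 * u₃ r = 0 := by
  have h1 : r + 1 ≠ 0 := by linarith
  have h3 : r + 3 ≠ 0 := by linarith
  have hS : √((r + 3) * (r - 1)) ≠ 0 := (sqrt_pos.2 (by nlinarith)).ne'
  rw [deriv_sq_a_mul_sq_c_mul_u₂ hr, sq_a hr, sq_c hr, a, b, h, u₁, u₂, u₃]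
  field_simp
  ring

theorem closure_eq₃ (hr : 1 < r) :
    (1 / h r) * deriv (fun s => a s * b s * c s ^ 2 * u₃ s) r
      + a r ^ 2 * b r * u₁ r + b r * c r ^ 2 * u₂ r = 0 := by
  have h1 : r + 1 ≠ 0 := by linarith
  have h3 : r + 3 ≠ 0 := by linarith
  have hS : √((r + 3) * (r - 1)) ≠ 0 := (sqrt_pos.2 (by nlinarith)).ne'
  rw [deriv_a_mul_b_mul_sq_c_mul_u₃ hr, sq_a hr, sq_c hr, b, h, u₁, u₂]
  field_simp
  ring

end A8

/-- The `L²`-normalisable harmonic 4-form of the Spin(7) manifold `𝔸₈`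
(duality opposite to the Cayley form): with the `𝔸₈` metric functions
`a = (1/2)√((r+3)(r-1))`, `b = -√((r+3)(r-1))/(r+1)`, `c = √((r²-1)/2)`,
`h = (r+1)/√((r+3)(r-1))` on `(1, ∞)`, the functions
`u₁ = 2/((r+1)³(r+3))`, `u₂ = -(r²+10r+13)/((r+1)³(r+3)³)`,
`u₃ = -2/((r+1)²(r+3)³)` satisfy the harmonic 4-form equations (55):
`(1/h)(c⁴u₁)' - 2bc²u₂ + 4ac²u₃ = 0`,
`(1/h)(a²c²u₂)' - a²b u₁ + bc²u₂ + 2ac²u₃ = 0`,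
`(1/h)(abc²u₃)' + a²b u₁ + bc²u₂ = 0`. -/
theorem A8_harmonic_four_form
    (a b c h u₁ u₂ u₃ : ℝ → ℝ)
    (hadef : a = fun r => (1 / 2) * Real.sqrt ((r + 3) * (r - 1)))
    (hbdef : b = fun r => -Real.sqrt ((r + 3) * (r - 1)) / (r + 1))
    (hcdef : c = fun r => Real.sqrt ((r ^ 2 - 1) / 2))
    (hhdef : h = fun r => (r + 1) / Real.sqrt ((r + 3) * (r - 1)))
    (hu₁ : u₁ = fun r => 2 / ((r + 1) ^ 3 * (r + 3)))
    (hu₂ : u₂ = fun r => -(r ^ 2 + 10 * r + 13) / ((r + 1) ^ 3 * (r + 3) ^ 3))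
    (hu₃ : u₃ = fun r => -2 / ((r + 1) ^ 2 * (r + 3) ^ 3)) :
    ∀ r ∈ Set.Ioi (1 : ℝ),
      (1 / h r) * deriv (fun s => (c s) ^ 4 * u₁ s) r
          - 2 * b r * (c r) ^ 2 * u₂ r + 4 * a r * (c r) ^ 2 * u₃ r = 0 ∧
      (1 / h r) * deriv (fun s => (a s) ^ 2 * (c s) ^ 2 * u₂ s) r
          - (a r) ^ 2 * b r * u₁ r + b r * (c r) ^ 2 * u₂ r
          + 2 * a r * (c r) ^ 2 * u₃ r = 0 ∧
      (1 / h r) * deriv (fun s => a s * b s * (c s) ^ 2 * u₃ s) r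
          + (a r) ^ 2 * b r * u₁ r + b r * (c r) ^ 2 * u₂ r = 0 := by
  obtain rfl : a = A8.a := hadef
  obtain rfl : b = A8.b := hbdef
  obtain rfl : c = A8.c := hcdef
  obtain rfl : h = A8.h := hhdef
  obtain rfl : u₁ = A8.u₁ := hu₁
  obtain rfl : u₂ = A8.u₂ := hu₂
  obtain rfl : u₃ = A8.u₃ := hu₃
  exact fun r hr => ⟨A8.closure_eq₁ hr, A8.closure_eq₂ hr, A8.closure_eq₃ hr⟩
end

section
/- Let a(r) = (1/2)√((r−3)(r+1)), b(r) = √((r−3)(r+1))/(r−1), c(r) = √((r²−1)/2), h(r) = (r−1)/√((r−3)(r+1)) be the 𝔹₈ metric functions on (3, ∞), and define u₁(r) = 2(r⁴+8r³+34r²−48r+21)/((r−1)³(r+1)⁵), u₂(r) = −(r⁴+4r³−18r²+52r−23)/((r−1)³(r+1)⁵), u₃(r) = 2(r²+14r−11)/((r−1)²(r+1)⁵). Then for all r > 3 the harmonic 4-form equations (55) hold: (1/h)(c⁴u₁)' − 2bc²u₂ + 4ac²u₃ = 0, (1/h)(a²c²u₂)' − a²b u₁ + bc²u₂ + 2ac²u₃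 = 0, and (1/h)(abc²u₃)' + a²b u₁ + bc²u₂ = 0, primes denoting d/dr. (These u_i define the anti-self-dual L²-normalisable harmonic 4-form of the Spin(7) manifold 𝔹₈.) -/
/-!
Write `Δ = (r - 3)(r + 1)`. The square roots of the `𝔹₈` metric enter the coefficient products
`c⁴u₁`, `a²c²u₂`, `abc²u₃` only through `c² = (r² - 1)/2` and `(√Δ)² = Δ`, so on `(3, ∞)` these
are rational functions of `r` and can be differentiated directly. Since moreover `1/h = b` and
`a = (r - 1) b / 2`, each equation (55) is `b` times a rational identity in `r`.
-/

open Real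

namespace B8

noncomputable def a (r : ℝ) : ℝ := 1 / 2 * √((r - 3) * (r + 1))

noncomputable def b (r : ℝ) : ℝ := √((r - 3) * (r + 1)) / (r - 1)

noncomputable def c (r : ℝ) : ℝ := √((r ^ 2 - 1) / 2)

noncomputable def h (r : ℝ) : ℝ := (r - 1) / √((r - 3) * (r + 1))

noncomputable def u₁ (r : ℝ) : ℝ :=
  2 * (r ^ 4 + 8 * r ^ 3 + 34 * r ^ 2 - 48 * r + 21) / ((r - 1) ^ 3 * (r + 1) ^ 5)

noncomputable def u₂ (r : ℝ) : ℝ :=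
  -(r ^ 4 + 4 * r ^ 3 - 18 * r ^ 2 + 52 * r - 23) / ((r - 1) ^ 3 * (r + 1) ^ 5)

noncomputable def u₃ (r : ℝ) : ℝ :=
  2 * (r ^ 2 + 14 * r - 11) / ((r - 1) ^ 2 * (r + 1) ^ 5)

noncomputable def coeff₁ (r : ℝ) : ℝ :=
  (r ^ 4 + 8 * r ^ 3 + 34 * r ^ 2 - 48 * r + 21) / (2 * (r - 1) * (r + 1) ^ 3)

noncomputable def coeff₂ (r : ℝ) : ℝ :=
  -((r - 3) * (r ^ 4 + 4 * r ^ 3 - 18 * r ^ 2 + 52 * r - 23)) / (8 * (r - 1) ^ 2 * (r + 1) ^ 3)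

noncomputable def coeff₃ (r : ℝ) : ℝ :=
  (r - 3) * (r ^ 2 + 14 * r - 11) / (2 * (r - 1) ^ 2 * (r + 1) ^ 3)

variable {r : ℝ}

theorem one_div_h (r : ℝ) : 1 / h r = b r := one_div_div _ _

theorem a_eq_mul_b (hr : r ≠ 1) : a r = (r - 1) * b r / 2 := by
  rw [a, b]
  field_simp [sub_ne_zero.mpr hr]

theorem c_sq (hr : 1 ≤ r) : c r ^ 2 = (r ^ 2 - 1) / 2 :=
  sq_sqrt (by nlinarith)

theorem a_mul_b (hr : 3 ≤ r) : a r * b r = (r - 3) * (r + 1) / (2 * (r - 1)) := by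
  rw [a, b, mul_div_assoc', mul_assoc, mul_self_sqrt (by nlinarith),
    one_div_mul_eq_div, div_div]

theorem a_sq (hr : 3 ≤ r) : a r ^ 2 = (r - 3) * (r + 1) / 4 := by
  rw [a, mul_pow, sq_sqrt (by nlinarith)]
  ring

theorem c_pow_four_mul_u₁ (hr : 1 < r) : c r ^ 4 * u₁ r = coeff₁ r := by
  have hr₁ : r - 1 ≠ 0 := by linarith
  have hr₂ : r + 1 ≠ 0 := by linarith
  rw [show c r ^ 4 = (c r ^ 2) ^ 2 by ring, c_sq hr.le, u₁, coeff₁]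
  field_simp
  ring

theorem a_sq_mul_c_sq_mul_u₂ (hr : 3 ≤ r) : a r ^ 2 * c r ^ 2 * u₂ r = coeff₂ r := by
  have hr₁ : r - 1 ≠ 0 := by linarith
  have hr₂ : r + 1 ≠ 0 := by linarith
  rw [a_sq hr, c_sq (by linarith), u₂, coeff₂]
  field_simp
  ring

theorem a_mul_b_mul_c_sq_mul_u₃ (hr : 3 ≤ r) : a r * b r * c r ^ 2 * u₃ r = coeff₃ r := by
  have hr₁ : r - 1 ≠ 0 := by linarith
  have hr₂ : r + 1 ≠ 0 := by linarith
  rw [a_mul_b hr, c_sq (by linarith), u₃, coeff₃]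
  field_simp
  ring

theorem deriv_coeff₁ (hr₁ : r - 1 ≠ 0) (hr₂ : r + 1 ≠ 0) :
    deriv coeff₁ r =
      -(3 * r ^ 4 + 28 * r ^ 3 - 94 * r ^ 2 + 124 * r - 45) / ((r - 1) ^ 2 * (r + 1) ^ 4) := by
  unfold coeff₁
  rw [deriv_fun_div (by fun_prop) (by fun_prop) (by simp [hr₁, hr₂])]
  simp (disch := fun_prop) only [deriv_fun_add, deriv_fun_sub, deriv_fun_mul, deriv_fun_pow,
    deriv_id'', deriv_const', deriv_const_mul_id']
  field_simp
  ring

theorem deriv_coeff₂ (hr₁ : r - 1 ≠ 0) (hr₂ : r + 1 ≠ 0) :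
    deriv coeff₂ r =
      -(7 * r ^ 4 - 44 * r ^ 3 + 114 * r ^ 2 - 92 * r + 31) / ((r - 1) ^ 3 * (r + 1) ^ 4) := by
  unfold coeff₂
  rw [deriv_fun_div (by fun_prop) (by fun_prop) (by simp [hr₁, hr₂])]
  simp (disch := fun_prop) only [deriv_fun_add, deriv_fun_sub, deriv_fun_mul, deriv_fun_pow,
    deriv.fun_neg', deriv_id'', deriv_const', deriv_const_mul_id']
  field_simp
  ring

theorem deriv_coeff₃ (hr₁ : r - 1 ≠ 0) (hr₂ : r + 1 ≠ 0) :
    deriv coeff₃ r =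
      -(r ^ 4 + 16 * r ^ 3 - 110 * r ^ 2 + 120 * r - 43) / ((r - 1) ^ 3 * (r + 1) ^ 4) := by
  unfold coeff₃
  rw [deriv_fun_div (by fun_prop) (by fun_prop) (by simp [hr₁, hr₂])]
  simp (disch := fun_prop) only [deriv_fun_add, deriv_fun_sub, deriv_fun_mul, deriv_fun_pow,
    deriv_id'', deriv_const', deriv_const_mul_id']
  field_simp
  ring

theorem harmonic_eq₁ (hr : 3 < r) :
    1 / h r * deriv (fun s => c s ^ 4 * u₁ s) r
      - 2 * b r * c r ^ 2 * u₂ r + 4 * a r * c r ^ 2 * u₃ r = 0 := by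
  have hr₁ : r - 1 ≠ 0 := by linarith
  have hr₂ : r + 1 ≠ 0 := by linarith
  have hderiv : deriv (fun s => c s ^ 4 * u₁ s) r = deriv coeff₁ r :=
    Filter.EventuallyEq.deriv_eq <|
      (eventually_gt_nhds (by linarith : 1 < r)).mono fun s hs => c_pow_four_mul_u₁ hs
  rw [one_div_h, hderiv, deriv_coeff₁ hr₁ hr₂, a_eq_mul_b (by linarith), c_sq (by linarith),
    u₂, u₃]
  field_simp
  ring

theorem harmonic_eq₂ (hr : 3 < r) :
    1 / h r * deriv (fun s => a s ^ 2 * c s ^ 2 * u₂ s) r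
      - a r ^ 2 * b r * u₁ r + b r * c r ^ 2 * u₂ r + 2 * a r * c r ^ 2 * u₃ r = 0 := by
  have hr₁ : r - 1 ≠ 0 := by linarith
  have hr₂ : r + 1 ≠ 0 := by linarith
  have hderiv : deriv (fun s => a s ^ 2 * c s ^ 2 * u₂ s) r = deriv coeff₂ r :=
    Filter.EventuallyEq.deriv_eq <|
      (eventually_gt_nhds hr).mono fun s hs => a_sq_mul_c_sq_mul_u₂ hs.le
  rw [one_div_h, hderiv, deriv_coeff₂ hr₁ hr₂, a_sq hr.le, a_eq_mul_b (by linarith),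
    c_sq (by linarith), u₁, u₂, u₃]
  field_simp
  ring

theorem harmonic_eq₃ (hr : 3 < r) :
    1 / h r * deriv (fun s => a s * b s * c s ^ 2 * u₃ s) r
      + a r ^ 2 * b r * u₁ r + b r * c r ^ 2 * u₂ r = 0 := by
  have hr₁ : r - 1 ≠ 0 := by linarith
  have hr₂ : r + 1 ≠ 0 := by linarith
  have hderiv : deriv (fun s => a s * b s * c s ^ 2 * u₃ s) r = deriv coeff₃ r :=
    Filter.EventuallyEq.deriv_eq <|
      (eventually_gt_nhds hr).mono fun s hs => a_mul_b_mul_c_sq_mul_u₃ hs.le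
  rw [one_div_h, hderiv, deriv_coeff₃ hr₁ hr₂, a_sq hr.le, c_sq (by linarith), u₁, u₂]
  field_simp
  ring

end B8

/-- The anti-self-dual `L²`-normalisable harmonic 4-form of the Spin(7)
manifold `𝔹₈`: with the `𝔹₈` metric functions
`a = (1/2)√((r-3)(r+1))`, `b = √((r-3)(r+1))/(r-1)`, `c = √((r²-1)/2)`,
`h = (r-1)/√((r-3)(r+1))` on `(3, ∞)`, the functions
`u₁ = 2(r⁴+8r³+34r²-48r+21)/((r-1)³(r+1)⁵)`,
`u₂ = -(r⁴+4r³-18r²+52r-23)/((r-1)³(r+1)⁵)`,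
`u₃ = 2(r²+14r-11)/((r-1)²(r+1)⁵)` satisfy the harmonic 4-form
equations (55):
`(1/h)(c⁴u₁)' - 2bc²u₂ + 4ac²u₃ = 0`,
`(1/h)(a²c²u₂)' - a²b u₁ + bc²u₂ + 2ac²u₃ = 0`,
`(1/h)(abc²u₃)' + a²b u₁ + bc²u₂ = 0`. -/
theorem B8_antiselfdual_harmonic_four_form
    (a b c h u₁ u₂ u₃ : ℝ → ℝ)
    (hadef : a = fun r => (1 / 2) * Real.sqrt ((r - 3) * (r + 1)))
    (hbdef : b = fun r => Real.sqrt ((r - 3) * (r + 1)) / (r - 1))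
    (hcdef : c = fun r => Real.sqrt ((r ^ 2 - 1) / 2))
    (hhdef : h = fun r => (r - 1) / Real.sqrt ((r - 3) * (r + 1)))
    (hu₁ : u₁ = fun r =>
      2 * (r ^ 4 + 8 * r ^ 3 + 34 * r ^ 2 - 48 * r + 21) / ((r - 1) ^ 3 * (r + 1) ^ 5))
    (hu₂ : u₂ = fun r =>
      -(r ^ 4 + 4 * r ^ 3 - 18 * r ^ 2 + 52 * r - 23) / ((r - 1) ^ 3 * (r + 1) ^ 5))
    (hu₃ : u₃ = fun r =>
      2 * (r ^ 2 + 14 * r - 11) / ((r - 1) ^ 2 * (r + 1) ^ 5)) :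
    ∀ r ∈ Set.Ioi (3 : ℝ),
      (1 / h r) * deriv (fun s => (c s) ^ 4 * u₁ s) r
          - 2 * b r * (c r) ^ 2 * u₂ r + 4 * a r * (c r) ^ 2 * u₃ r = 0 ∧
      (1 / h r) * deriv (fun s => (a s) ^ 2 * (c s) ^ 2 * u₂ s) r
          - (a r) ^ 2 * b r * u₁ r + b r * (c r) ^ 2 * u₂ r
          + 2 * a r * (c r) ^ 2 * u₃ r = 0 ∧
      (1 / h r) * deriv (fun s => a s * b s * (c s) ^ 2 * u₃ s) r
          + (a r) ^ 2 * b r * u₁ r + b r * (c r) ^ 2 * u₂ r = 0 := by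
  subst hadef hbdef hcdef hhdef hu₁ hu₂ hu₃
  intro r hr
  exact ⟨B8.harmonic_eq₁ hr, B8.harmonic_eq₂ hr, B8.harmonic_eq₃ hr⟩
end

section
/- Let u₁(r) = 2/((r+1)³(r+3)), u₂(r) = −(r²+10r+13)/((r+1)³(r+3)³), u₃(r) = −2/((r+1)²(r+3)³). Then for all r > 1 one has the identity 48(u₁² + 2u₂² + 4u₃²) = 96(3r⁴ + 44r³ + 242r² + 492r + 339)/((r+1)⁶(r+3)⁶); moreover the function r ↦ (r+3)(r−1)(r²−1)² · (3r⁴ + 44r³ + 242r² + 492r + 339)/((r+1)⁶(r+3)⁶) is integrable on the interval (1, ∞). (This is the squared norm |G₍₄₎|² of the harmonic 4-form on 𝔸₈ and its L²-normalisability against the radial volume density of the Spin(7) metric (35).) -/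
open MeasureTheory

/-- The squared norm of the `L²` harmonic 4-form on `𝔸₈` and its
normalisability: with `u₁ = 2/((r+1)³(r+3))`,
`u₂ = -(r²+10r+13)/((r+1)³(r+3)³)`, `u₃ = -2/((r+1)²(r+3)³)`, one has
`48(u₁² + 2u₂² + 4u₃²) = 96(3r⁴+44r³+242r²+492r+339)/((r+1)⁶(r+3)⁶)` for all
`r > 1`, and the function
`r ↦ (r+3)(r-1)(r²-1)² (3r⁴+44r³+242r²+492r+339)/((r+1)⁶(r+3)⁶)`
is integrable on `(1, ∞)`. -/
theorem A8_harmonic_form_norm_and_L2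
    (u₁ u₂ u₃ : ℝ → ℝ)
    (hu₁ : u₁ = fun r => 2 / ((r + 1) ^ 3 * (r + 3)))
    (hu₂ : u₂ = fun r => -(r ^ 2 + 10 * r + 13) / ((r + 1) ^ 3 * (r + 3) ^ 3))
    (hu₃ : u₃ = fun r => -2 / ((r + 1) ^ 2 * (r + 3) ^ 3)) :
    (∀ r : ℝ, 1 < r →
      48 * ((u₁ r) ^ 2 + 2 * (u₂ r) ^ 2 + 4 * (u₃ r) ^ 2) =
        96 * (3 * r ^ 4 + 44 * r ^ 3 + 242 * r ^ 2 + 492 * r + 339) /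
          ((r + 1) ^ 6 * (r + 3) ^ 6)) ∧
    IntegrableOn
      (fun r : ℝ =>
        (r + 3) * (r - 1) * (r ^ 2 - 1) ^ 2 *
          (3 * r ^ 4 + 44 * r ^ 3 + 242 * r ^ 2 + 492 * r + 339) /
            ((r + 1) ^ 6 * (r + 3) ^ 6))
      (Set.Ioi (1 : ℝ)) volume := by
  constructor
  · intro r hr
    subst hu₁ hu₂ hu₃
    have h1 : r + 1 ≠ 0 := by intro h; linarith [h]
    have h3 : r + 3 ≠ 0 := by intro h; linarith [h]
    field_simp
    ring
  · -- comparison with 4480 / r ^ 2 on (1, ∞)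
    have hg : IntegrableOn (fun r : ℝ => 4480 / r ^ 2) (Set.Ioi (1 : ℝ)) volume := by
      have h : IntegrableOn (fun r : ℝ => 4480 * r ^ (-2 : ℝ)) (Set.Ioi 1) volume :=
        (integrableOn_Ioi_rpow_of_lt (by norm_num : (-2 : ℝ) < -1)
          (by norm_num : (0:ℝ) < 1)).const_mul (4480 : ℝ)
      refine IntegrableOn.congr_fun h (fun r hr => ?_) measurableSet_Ioi
      have hr0 : (0:ℝ) < r := lt_trans one_pos hr
      have h2 : r ^ (-2 : ℝ) = (r ^ 2)⁻¹ := by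
        rw [Real.rpow_neg hr0.le, ← Real.rpow_natCast r 2]
        norm_num
      rw [h2, div_eq_mul_inv]
    have hmeas : AEStronglyMeasurable
        (fun r : ℝ =>
          (r + 3) * (r - 1) * (r ^ 2 - 1) ^ 2 *
            (3 * r ^ 4 + 44 * r ^ 3 + 242 * r ^ 2 + 492 * r + 339) /
              ((r + 1) ^ 6 * (r + 3) ^ 6))
        (volume.restrict (Set.Ioi (1:ℝ))) := by
      apply Measurable.aestronglyMeasurable
      fun_prop
    refine Integrable.mono hg hmeas ?_
    rw [ae_restrict_iff' measurableSet_Ioi]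
    refine Filter.Eventually.of_forall (fun r hr => ?_)
    have hr1 : (1:ℝ) < r := hr
    have hr0 : (0:ℝ) < r := lt_trans one_pos hr
    have hQ : (0:ℝ) ≤ 3 * r ^ 4 + 44 * r ^ 3 + 242 * r ^ 2 + 492 * r + 339 := by
      nlinarith [pow_nonneg hr0.le 4, pow_nonneg hr0.le 3, sq_nonneg r]
    have hN0 : (0:ℝ) ≤ (r + 3) * (r - 1) * (r ^ 2 - 1) ^ 2 *
        (3 * r ^ 4 + 44 * r ^ 3 + 242 * r ^ 2 + 492 * r + 339) := by
      have : (0:ℝ) ≤ (r + 3) * (r - 1) := by nlinarith [hr1]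
      have := mul_nonneg this (sq_nonneg (r ^ 2 - 1))
      exact mul_nonneg this hQ
    have hD0 : (0:ℝ) < (r + 1) ^ 6 * (r + 3) ^ 6 := by positivity
    have hf0 : (0:ℝ) ≤ (r + 3) * (r - 1) * (r ^ 2 - 1) ^ 2 *
        (3 * r ^ 4 + 44 * r ^ 3 + 242 * r ^ 2 + 492 * r + 339) /
          ((r + 1) ^ 6 * (r + 3) ^ 6) := div_nonneg hN0 hD0.le
    have habs : ‖(r + 3) * (r - 1) * (r ^ 2 - 1) ^ 2 *
        (3 * r ^ 4 + 44 * r ^ 3 + 242 * r ^ 2 + 492 * r + 339) /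
          ((r + 1) ^ 6 * (r + 3) ^ 6)‖ = (r + 3) * (r - 1) * (r ^ 2 - 1) ^ 2 *
        (3 * r ^ 4 + 44 * r ^ 3 + 242 * r ^ 2 + 492 * r + 339) /
          ((r + 1) ^ 6 * (r + 3) ^ 6) := by
      rw [Real.norm_eq_abs, abs_of_nonneg hf0]
    have hgabs : ‖(4480 : ℝ) / r ^ 2‖ = 4480 / r ^ 2 := by
      rw [Real.norm_eq_abs, abs_of_nonneg (by positivity)]
    show _ ≤ _
    rw [habs, hgabs]
    -- numerator bound: N ≤ 4480 r^10, denominator bound: r^12 ≤ D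
    have hAB : (r + 3) * (r - 1) ≤ 4 * r ^ 2 := by nlinarith [hr1]
    have hC : (r ^ 2 - 1) ^ 2 ≤ (r ^ 2) ^ 2 := by nlinarith [hr1, sq_nonneg r]
    have hQle : 3 * r ^ 4 + 44 * r ^ 3 + 242 * r ^ 2 + 492 * r + 339 ≤ 1120 * r ^ 4 := by
      nlinarith [pow_lt_pow_left₀ hr (by norm_num : (0:ℝ) ≤ 1) (by norm_num : 4 ≠ 0),
        pow_lt_pow_left₀ hr (by norm_num : (0:ℝ) ≤ 1) (by norm_num : 3 ≠ 0),
        pow_lt_pow_left₀ hr (by norm_num : (0:ℝ) ≤ 1) (by norm_num : 2 ≠ 0)]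
    have hN : (r + 3) * (r - 1) * (r ^ 2 - 1) ^ 2 *
        (3 * r ^ 4 + 44 * r ^ 3 + 242 * r ^ 2 + 492 * r + 339) ≤ 4480 * r ^ 10 := by
      have h1 : (r + 3) * (r - 1) * (r ^ 2 - 1) ^ 2 ≤ 4 * r ^ 2 * (r ^ 2) ^ 2 :=
        mul_le_mul hAB hC (sq_nonneg _) (by positivity)
      calc (r + 3) * (r - 1) * (r ^ 2 - 1) ^ 2 *
          (3 * r ^ 4 + 44 * r ^ 3 + 242 * r ^ 2 + 492 * r + 339)
          ≤ 4 * r ^ 2 * (r ^ 2) ^ 2 * (1120 * r ^ 4) :=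
            mul_le_mul h1 hQle hQ (by positivity)
        _ = 4480 * r ^ 10 := by ring
    have hD : r ^ 12 ≤ (r + 1) ^ 6 * (r + 3) ^ 6 := by
      have h1 : r ^ 6 ≤ (r + 1) ^ 6 := pow_le_pow_left₀ hr0.le (by linarith) 6
      have h2 : r ^ 6 ≤ (r + 3) ^ 6 := pow_le_pow_left₀ hr0.le (by linarith) 6
      calc r ^ 12 = r ^ 6 * r ^ 6 := by ring
        _ ≤ (r + 1) ^ 6 * (r + 3) ^ 6 :=
            mul_le_mul h1 h2 (by positivity) (by positivity)
    calc (r + 3) * (r - 1) * (r ^ 2 - 1) ^ 2 *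
        (3 * r ^ 4 + 44 * r ^ 3 + 242 * r ^ 2 + 492 * r + 339) /
          ((r + 1) ^ 6 * (r + 3) ^ 6)
        ≤ 4480 * r ^ 10 / r ^ 12 := div_le_div₀ (by positivity) hN (by positivity) hD
      _ = 4480 / r ^ 2 := by field_simp
end

section
/- Let u₁(r) = 2(r⁴+8r³+34r²−48r+21)/((r−1)³(r+1)⁵), u₂(r) = −(r⁴+4r³−18r²+52r−23)/((r−1)³(r+1)⁵), u₃(r) = 2(r²+14r−11)/((r−1)²(r+1)⁵). Then for all r > 3 one has the identity 48(u₁² + 2u₂² + 4u₃²) = 96(3r⁸ + 40r⁷ + 252r⁶ + 1064r⁵ + 2506r⁴ − 12936r³ + 18284r² − 10824r + 2379)/((r−1)⁶(r+1)¹⁰); moreover the function r ↦ (r−3)(r+1)(r²−1)² · (3r⁸ + 40r⁷ + 252r⁶ + 1064r⁵ + 2506r⁴ − 12936r³ + 18284r² − 10824r + 2379)/((r−1)⁶(r+1)¹⁰) is integrable on the interval (3, ∞). (This is the squared norm |G₍₄₎|² of the anti-self-dual harmonic 4-form on 𝔹₈ and its L²-normalisability against the radial volume density of the Spin(7) metric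 (37).) -/
open MeasureTheory

private lemma Pbound (r : ℝ) (hr : 3 < r) :
    |3 * r ^ 8 + 40 * r ^ 7 + 252 * r ^ 6 + 1064 * r ^ 5
      + 2506 * r ^ 4 - 12936 * r ^ 3 + 18284 * r ^ 2 - 10824 * r + 2379|
      ≤ 48288 * r ^ 8 := by
  have h1 : (1:ℝ) ≤ r := by linarith
  have h0 : r ^ 0 ≤ r ^ 8 := pow_le_pow_right₀ h1 (by norm_num)
  have h1' : r ^ 1 ≤ r ^ 8 := pow_le_pow_right₀ h1 (by norm_num)
  have h2 : r ^ 2 ≤ r ^ 8 := pow_le_pow_right₀ h1 (by norm_num)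
  have h3 : r ^ 3 ≤ r ^ 8 := pow_le_pow_right₀ h1 (by norm_num)
  have h4 : r ^ 4 ≤ r ^ 8 := pow_le_pow_right₀ h1 (by norm_num)
  have h5 : r ^ 5 ≤ r ^ 8 := pow_le_pow_right₀ h1 (by norm_num)
  have h6 : r ^ 6 ≤ r ^ 8 := pow_le_pow_right₀ h1 (by norm_num)
  have h7 : r ^ 7 ≤ r ^ 8 := pow_le_pow_right₀ h1 (by norm_num)
  have hk : ∀ k : ℕ, 1 ≤ r ^ k := fun k => one_le_pow₀ h1
  rw [abs_le]
  constructor <;> simp only [pow_zero] at h0 <;> nlinarith [hk 0, hk 1, hk 2, hk 3]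

private lemma key_bound (r : ℝ) (hr : 3 < r) :
    |(r - 3) * (r + 1) * (r ^ 2 - 1) ^ 2 *
          (3 * r ^ 8 + 40 * r ^ 7 + 252 * r ^ 6 + 1064 * r ^ 5
            + 2506 * r ^ 4 - 12936 * r ^ 3 + 18284 * r ^ 2 - 10824 * r + 2379) /
            ((r - 1) ^ 6 * (r + 1) ^ 10)|
      ≤ 1100061 * (r ^ 2)⁻¹ := by
  have hr0 : (0:ℝ) < r := by linarith
  have hD : (0:ℝ) < (r - 1) ^ 6 * (r + 1) ^ 10 :=
    mul_pos (pow_pos (by linarith) 6) (pow_pos (by linarith) 10)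
  rw [abs_div, abs_of_pos hD, div_le_iff₀ hD]
  have hNbd : |(r - 3) * (r + 1) * (r ^ 2 - 1) ^ 2| ≤ 2 * r ^ 6 := by
    rw [abs_of_nonneg (mul_nonneg (by nlinarith : (0:ℝ) ≤ (r - 3) * (r + 1)) (sq_nonneg _))]
    have e1 : r ^ 3 ≤ r ^ 4 := pow_le_pow_right₀ (by linarith) (by norm_num)
    have e2 : r ^ 2 ≤ r ^ 4 := pow_le_pow_right₀ (by linarith) (by norm_num)
    have e3 : r ≤ r ^ 4 := by
      calc r = r ^ 1 := (pow_one r).symm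
        _ ≤ r ^ 4 := pow_le_pow_right₀ (by linarith) (by norm_num)
    have e4 : (1:ℝ) ≤ r ^ 4 := one_le_pow₀ (by linarith)
    have e5 : 9 * r ^ 4 ≤ r ^ 6 := by
      have h9 : (9:ℝ) ≤ r ^ 2 := by nlinarith
      calc 9 * r ^ 4 ≤ r ^ 2 * r ^ 4 :=
            mul_le_mul_of_nonneg_right h9 (le_of_lt (pow_pos hr0 4))
        _ = r ^ 6 := by ring
    nlinarith [pow_pos hr0 5, pow_pos hr0 6]
  have hP := Pbound r hr
  have hN : |(r - 3) * (r + 1) * (r ^ 2 - 1) ^ 2 *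
      (3 * r ^ 8 + 40 * r ^ 7 + 252 * r ^ 6 + 1064 * r ^ 5
        + 2506 * r ^ 4 - 12936 * r ^ 3 + 18284 * r ^ 2 - 10824 * r + 2379)|
      ≤ 96576 * r ^ 14 := by
    rw [abs_mul]
    calc |(r - 3) * (r + 1) * (r ^ 2 - 1) ^ 2| *
        |3 * r ^ 8 + 40 * r ^ 7 + 252 * r ^ 6 + 1064 * r ^ 5
          + 2506 * r ^ 4 - 12936 * r ^ 3 + 18284 * r ^ 2 - 10824 * r + 2379|
        ≤ (2 * r ^ 6) * (48288 * r ^ 8) :=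
          mul_le_mul hNbd hP (abs_nonneg _) (by positivity)
      _ = 96576 * r ^ 14 := by ring
  refine hN.trans ?_
  have hM : 96576 * r ^ 16 ≤ 1100061 * ((r - 1) ^ 6 * (r + 1) ^ 10) := by
    have h1 : (2/3 * r) ^ 6 ≤ (r - 1) ^ 6 :=
      pow_le_pow_left₀ (by positivity) (by linarith) 6
    have h2 : r ^ 10 ≤ (r + 1) ^ 10 :=
      pow_le_pow_left₀ (le_of_lt hr0) (by linarith) 10
    have := mul_le_mul h1 h2 (by positivity) (by positivity)
    nlinarith [this]
  have hr2 : (0:ℝ) < r ^ 2 := by positivity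
  refine le_of_mul_le_mul_right ?_ hr2
  calc 96576 * r ^ 14 * r ^ 2 = 96576 * r ^ 16 := by ring
    _ ≤ 1100061 * ((r - 1) ^ 6 * (r + 1) ^ 10) := hM
    _ = 1100061 * (r ^ 2)⁻¹ * ((r - 1) ^ 6 * (r + 1) ^ 10) * r ^ 2 := by
        field_simp

/-- The squared norm of the anti-self-dual `L²` harmonic 4-form on `𝔹₈` and
its normalisability: with
`u₁ = 2(r⁴+8r³+34r²-48r+21)/((r-1)³(r+1)⁵)`,
`u₂ = -(r⁴+4r³-18r²+52r-23)/((r-1)³(r+1)⁵)`,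
`u₃ = 2(r²+14r-11)/((r-1)²(r+1)⁵)`, one has
`48(u₁² + 2u₂² + 4u₃²) = 96 P(r)/((r-1)⁶(r+1)¹⁰)` for all `r > 3`, where
`P(r) = 3r⁸+40r⁷+252r⁶+1064r⁵+2506r⁴-12936r³+18284r²-10824r+2379`, and the
function `r ↦ (r-3)(r+1)(r²-1)² P(r)/((r-1)⁶(r+1)¹⁰)` is integrable on
`(3, ∞)`. -/
theorem B8_harmonic_form_norm_and_L2
    (u₁ u₂ u₃ : ℝ → ℝ)
    (hu₁ : u₁ = fun r =>
      2 * (r ^ 4 + 8 * r ^ 3 + 34 * r ^ 2 - 48 * r + 21) / ((r - 1) ^ 3 * (r + 1) ^ 5))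
    (hu₂ : u₂ = fun r =>
      -(r ^ 4 + 4 * r ^ 3 - 18 * r ^ 2 + 52 * r - 23) / ((r - 1) ^ 3 * (r + 1) ^ 5))
    (hu₃ : u₃ = fun r =>
      2 * (r ^ 2 + 14 * r - 11) / ((r - 1) ^ 2 * (r + 1) ^ 5)) :
    (∀ r : ℝ, 3 < r →
      48 * ((u₁ r) ^ 2 + 2 * (u₂ r) ^ 2 + 4 * (u₃ r) ^ 2) =
        96 * (3 * r ^ 8 + 40 * r ^ 7 + 252 * r ^ 6 + 1064 * r ^ 5
            + 2506 * r ^ 4 - 12936 * r ^ 3 + 18284 * r ^ 2 - 10824 * r + 2379) /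
          ((r - 1) ^ 6 * (r + 1) ^ 10)) ∧
    IntegrableOn
      (fun r : ℝ =>
        (r - 3) * (r + 1) * (r ^ 2 - 1) ^ 2 *
          (3 * r ^ 8 + 40 * r ^ 7 + 252 * r ^ 6 + 1064 * r ^ 5
            + 2506 * r ^ 4 - 12936 * r ^ 3 + 18284 * r ^ 2 - 10824 * r + 2379) /
            ((r - 1) ^ 6 * (r + 1) ^ 10))
      (Set.Ioi (3 : ℝ)) volume := by
  constructor
  · intro r hr
    have h1 : r - 1 ≠ 0 := by intro h; nlinarith [h]
    have h2 : r + 1 ≠ 0 := by intro h; nlinarith [h]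
    subst hu₁ hu₂ hu₃
    field_simp
    ring
  · -- integrability via comparison with 1100061 * (r^2)⁻¹
    have hg : IntegrableOn (fun r : ℝ => 1100061 * (r ^ 2)⁻¹) (Set.Ioi (3:ℝ)) volume := by
      have h := (integrableOn_Ioi_rpow_iff (show (0:ℝ) < 3 by norm_num)).mpr
        (show (-2:ℝ) < -1 by norm_num)
      have h2 : IntegrableOn (fun x : ℝ => 1100061 * x ^ (-2 : ℝ)) (Set.Ioi 3) volume :=
        h.const_mul 1100061
      refine h2.congr_fun ?_ measurableSet_Ioi
      intro x hx
      have hx0 : (0:ℝ) < x := lt_trans (by norm_num) hx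
      simp only
      rw [show ((-2:ℝ)) = -(2:ℕ) by norm_num, Real.rpow_neg hx0.le, Real.rpow_natCast]
    refine Integrable.mono hg ?_ ?_
    · apply ContinuousOn.aestronglyMeasurable ?_ measurableSet_Ioi
      apply ContinuousOn.div (by fun_prop) (by fun_prop)
      intro r hr
      have hr' : (3:ℝ) < r := hr
      exact ne_of_gt (mul_pos (pow_pos (by linarith) 6) (pow_pos (by linarith) 10))
    · filter_upwards [ae_restrict_mem measurableSet_Ioi] with r hr
      have hb := key_bound r hr
      have hr0 : (0:ℝ) < r := lt_trans (by norm_num) hr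
      rw [Real.norm_eq_abs, Real.norm_eq_abs]
      refine hb.trans (le_of_eq ?_)
      rw [abs_of_nonneg (by positivity)]
end
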